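/- arXiv:1209.3798 — 7 statements merged into one kernel-verified Lean document; each statement's English description precedes it below -/
import Mathlib

section
/- Let p, q be coprime positive integers and set θ = q(α − p/q), and suppose 0 < θ < 1/q. Then each interval [j/q, (j+1)/q), 0 ≤ j ≤ q−1, contains exactly one point of the form {kα} with 0 ≤ k ≤ q−1, where {·} denotes fractional part. -/
/-!
Since `q α = p + θ`, for `k < q` we get `k α = ⌊k p / q⌋ + (k p mod q + k θ) / q`, and
`0 ≤ k θ < q θ < 1`; hence `{k α}` lies in `[j/q, (j+1)/q)` exactly when `k p ≡ j (mod q)`.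
As `p` is a unit mod `q`, that congruence has exactly one solution `k < q`.
-/

open Set

theorem Nat.existsUnique_lt_mul_mod_eq {p q j : ℕ} (hpq : p.Coprime q) (hj : j < q) :
    ∃! k, k < q ∧ k * p % q = j := by
  have : NeZero q := ⟨by omega⟩
  set k := ((j : ZMod q) * (p : ZMod q)⁻¹).val
  have hk : k * p % q = j := by
    rw [← ZMod.val_natCast, Nat.cast_mul, ZMod.natCast_zmod_val, mul_assoc,
      mul_comm _ (p : ZMod q), ZMod.coe_mul_inv_eq_one p hpq, mul_one, ZMod.val_natCast,
      Nat.mod_eq_of_lt hj]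
  refine ⟨k, ⟨ZMod.val_lt _, hk⟩, fun k' ⟨hk'q, hk'⟩ => ?_⟩
  have hmul : k' * p ≡ k * p [MOD q] := hk'.trans hk.symm
  exact (hmul.cancel_right_of_coprime hpq.symm).eq_of_lt_of_lt hk'q (ZMod.val_lt _)

theorem add_div_mem_Ico_div_iff {q t : ℝ} {r j : ℕ} (hq : 0 < q) (ht₀ : 0 ≤ t) (ht₁ : t < 1) :
    (r + t) / q ∈ Ico (j / q) ((j + 1) / q) ↔ r = j := by
  rw [mem_Ico, div_le_div_iff_of_pos_right hq, div_lt_div_iff_of_pos_right hq,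
    ← Nat.floor_eq_iff (by positivity), add_comm, Nat.floor_add_natCast ht₀,
    Nat.floor_eq_zero.mpr ht₁, zero_add]

theorem Int.fract_natCast_mul_eq {α θ : ℝ} {p q k : ℕ} (hq : 0 < q) (hα : q * α = p + θ)
    (hkθ₀ : 0 ≤ k * θ) (hkθ₁ : k * θ < 1) :
    Int.fract (k * α) = ((k * p % q : ℕ) + k * θ) / q := by
  have hqR : (0 : ℝ) < q := by exact_mod_cast hq
  have hr : ((k * p % q : ℕ) : ℝ) + 1 ≤ q := by exact_mod_cast Nat.mod_lt (k * p) hq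
  refine Int.fract_eq_iff.mpr
    ⟨by positivity, (div_lt_one hqR).mpr (by linarith), ((k * p / q : ℕ) : ℤ), ?_⟩
  have hdiv : (k : ℝ) * p = q * (k * p / q : ℕ) + (k * p % q : ℕ) := by
    exact_mod_cast (Nat.div_add_mod (k * p) q).symm
  rw [Int.cast_natCast]
  field_simp
  linear_combination k * hα + hdiv

theorem stmt3_general (α : ℝ) (p q : ℕ) (hq : 0 < q) (hcop : Nat.Coprime p q)
    (θ : ℝ) (hθ : θ = (q : ℝ) * (α - (p : ℝ) / (q : ℝ)))
    (hθpos : 0 < θ) (hθlt : θ < 1 / (q : ℝ)) :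
    ∀ j : ℕ, j ≤ q - 1 →
      ∃! k : ℕ, k ≤ q - 1 ∧
        Int.fract ((k : ℝ) * α) ∈ Set.Ico ((j : ℝ) / (q : ℝ)) (((j : ℝ) + 1) / (q : ℝ)) := by
  intro j hj
  have hqR : (0 : ℝ) < q := by exact_mod_cast hq
  have hα : q * α = p + θ := by
    rw [hθ, mul_sub, mul_div_cancel₀ _ hqR.ne']
    ring
  have hmem : ∀ k < q, Int.fract ((k : ℝ) * α) ∈ Ico ((j : ℝ) / q) ((j + 1) / q) ↔
      k * p % q = j := by
    intro k hk
    have hkθ₀ : 0 ≤ (k : ℝ) * θ := by positivity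
    have hkθ₁ : (k : ℝ) * θ < 1 := calc
      (k : ℝ) * θ ≤ q * θ := by gcongr
      _ < q * (1 / q) := by gcongr
      _ = 1 := mul_one_div_cancel hqR.ne'
    rw [Int.fract_natCast_mul_eq hq hα hkθ₀ hkθ₁, add_div_mem_Ico_div_iff hqR hkθ₀ hkθ₁]
  obtain ⟨k, ⟨hkq, hkj⟩, hunique⟩ := Nat.existsUnique_lt_mul_mod_eq hcop (show j < q by omega)
  refine ⟨k, ⟨by omega, (hmem k hkq).mpr hkj⟩, fun k' ⟨hk', hk'mem⟩ => ?_⟩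
  have hk'q : k' < q := by omega
  exact hunique k' ⟨hk'q, (hmem k' hk'q).mp hk'mem⟩

theorem stmt3 (α : ℝ) (p q : ℕ) (hp : 0 < p) (hq : 0 < q) (hcop : Nat.Coprime p q)
    (θ : ℝ) (hθ : θ = (q : ℝ) * (α - (p : ℝ) / (q : ℝ)))
    (hθpos : 0 < θ) (hθlt : θ < 1 / (q : ℝ)) :
    ∀ j : ℕ, j ≤ q - 1 →
      ∃! k : ℕ, k ≤ q - 1 ∧
        Int.fract ((k : ℝ) * α) ∈ Set.Ico ((j : ℝ) / (q : ℝ)) (((j : ℝ) + 1) / (q : ℝ)) :=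
  stmt3_general α p q hq hcop θ hθ hθpos hθlt
end

section
/- Let p, q be coprime positive integers with |α − p/q| < 1/q². Then for every x ∈ [0,1), the distance (on the circle ℝ/ℤ) between any two consecutive elements of the set { {x + kα} : k = 0, …, q−1 } is strictly less than 2/q. -/
/-!
Write `α = p / q + θ` with `q |θ| < 1 / q`. As `k` runs over `0, …, q - 1`, `k p` runs over all
residues modulo `q`, so modulo `1` the points `x + k α` are the grid points `x + j / q`, each moved
by `k θ`: by less than `1 / q`, and all in the same direction. Hence every open arc of length
`2 / q` contains one of them, which rules out a gap of length `≥ 2 / q`.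
-/

open Set

theorem Nat.Coprime.exists_lt_mul_sub_mul_eq {p q : ℕ} (hcop : p.Coprime q) (hq : 0 < q)
    (j : ℤ) : ∃ k < q, ∃ m : ℤ, (k : ℤ) * p - m * q = j := by
  have : NeZero q := ⟨hq.ne'⟩
  set u := ZMod.unitOfCoprime p hcop
  refine ⟨((u⁻¹ : (ZMod q)ˣ) * (j : ZMod q)).val, ZMod.val_lt _, ?_⟩
  have hcongr : (((((u⁻¹ : (ZMod q)ˣ) * (j : ZMod q)).val * p : ℕ) : ℤ) : ZMod q) = (j : ZMod q) := by
    push_cast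
    rw [ZMod.natCast_zmod_val, ← ZMod.coe_unitOfCoprime p hcop, mul_right_comm, Units.inv_mul, one_mul]
  obtain ⟨m, hm⟩ := (ZMod.intCast_eq_intCast_iff_dvd_sub _ _ _).mp hcongr
  exact ⟨-m, by push_cast at hm; linear_combination -hm⟩

theorem abs_natCast_mul_lt_of_abs_lt {k q : ℕ} {θ : ℝ} (hq : 0 < q) (hk : k ≤ q)
    (hθ : |θ| < 1 / (q : ℝ) ^ 2) : |(k : ℝ) * θ| < 1 / q := by
  have hq' : (0 : ℝ) < q := by exact_mod_cast hq
  calc |(k : ℝ) * θ| = k * |θ| := by rw [abs_mul, Nat.abs_cast]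
    _ ≤ q * |θ| := by gcongr
    _ < q * (1 / (q : ℝ) ^ 2) := by gcongr
    _ = 1 / q := by field_simp

theorem exists_intCast_div_add_mem_Ioo {q : ℝ} (hq : 0 < q) (f : ℤ → ℝ)
    (hf : ∀ j, |f j| < 1 / q) (hsign : (∀ j, 0 ≤ f j) ∨ ∀ j, f j ≤ 0) (s : ℝ) :
    ∃ j : ℤ, (j : ℝ) / q + f j ∈ Ioo s (s + 2 / q) := by
  have hq' : 0 < 1 / q := by positivity
  have hgrid (j : ℤ) : j • (1 / q) = (j : ℝ) / q := by rw [zsmul_eq_mul, mul_one_div]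
  have htwo : 2 / q = 1 / q + 1 / q := by ring
  rcases hsign with hnonneg | hnonpos
  · obtain ⟨j, hj, -⟩ := existsUnique_add_zsmul_mem_Ioc hq' 0 s
    rw [zero_add, hgrid] at hj
    have hsmall := (abs_lt.mp (hf j)).2
    exact ⟨j, by linarith [hj.1, hnonneg j], by linarith [hj.2]⟩
  · obtain ⟨j, hj, -⟩ := existsUnique_add_zsmul_mem_Ico hq' 0 (s + 1 / q)
    rw [zero_add, hgrid] at hj
    have hsmall := (abs_lt.mp (hf j)).1
    exact ⟨j, by linarith [hj.1], by linarith [hj.2, hnonpos j]⟩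

theorem exists_add_natCast_mul_sub_intCast_mem_Ioo {α : ℝ} {p q : ℕ} (hq : 0 < q)
    (hcop : p.Coprime q) (happrox : |α - (p : ℝ) / q| < 1 / (q : ℝ) ^ 2) (x t : ℝ) :
    ∃ k < q, ∃ n : ℤ, x + (k : ℝ) * α - n ∈ Ioo t (t + 2 / q) := by
  have hq' : (0 : ℝ) < q := by exact_mod_cast hq
  set θ := α - (p : ℝ) / q
  choose k hkq m hkm using hcop.exists_lt_mul_sub_mul_eq hq
  -- `x + k α ≡ x + k p / q + k θ ≡ x + j / q + k θ` modulo `1`, where `k p = j + m q`.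
  have hshift (j : ℤ) : x + (k j : ℝ) * α - m j = x + ((j : ℝ) / q + k j * θ) := by
    have hkp : ((k j : ℝ) * p - m j * q) = j := by exact_mod_cast hkm j
    rw [← hkp]
    simp only [θ]
    field_simp
    ring
  have hsign : (∀ j, 0 ≤ (k j : ℝ) * θ) ∨ ∀ j, (k j : ℝ) * θ ≤ 0 := by
    rcases le_total 0 θ with h | h
    · exact .inl fun j => mul_nonneg (Nat.cast_nonneg _) h
    · exact .inr fun j => mul_nonpos_of_nonneg_of_nonpos (Nat.cast_nonneg _) h
  obtain ⟨j, hj⟩ := exists_intCast_div_add_mem_Ioo hq' (fun j => (k j : ℝ) * θ)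
    (fun j => abs_natCast_mul_lt_of_abs_lt hq (hkq j).le happrox) hsign (t - x)
  refine ⟨k j, hkq j, m j, ?_⟩
  rw [hshift]
  exact ⟨by linarith [hj.1], by linarith [hj.2]⟩

theorem stmt4_general (α : ℝ) (p q : ℕ) (hq : 0 < q) (hcop : Nat.Coprime p q)
    (happrox : |α - (p : ℝ) / (q : ℝ)| < 1 / (q : ℝ)^2)
    (x : ℝ)
    (S : Finset ℝ) (hS : S = (Finset.range q).image (fun k : ℕ => Int.fract (x + (k : ℝ) * α))) :
    -- gaps between consecutive elements of S (in increasing order) are < 2/q …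
    (∀ u ∈ S, ∀ v ∈ S, u < v → (∀ w ∈ S, ¬ (u < w ∧ w < v)) → v - u < 2 / (q : ℝ)) ∧
    -- … including the wrap-around gap on the circle, from the largest to the smallest element
    (∀ u ∈ S, ∀ v ∈ S, (∀ w ∈ S, w ≤ u) → (∀ w ∈ S, v ≤ w) → (v + 1) - u < 2 / (q : ℝ)) := by
  have hfract_mem (k : ℕ) (hk : k < q) : Int.fract (x + (k : ℝ) * α) ∈ S :=
    hS ▸ Finset.mem_image_of_mem _ (Finset.mem_range.mpr hk)
  have hunit (w : ℝ) (hw : w ∈ S) : w ∈ Ico (0 : ℝ) 1 := by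
    obtain ⟨k, -, rfl⟩ := Finset.mem_image.mp (hS ▸ hw)
    exact ⟨Int.fract_nonneg _, Int.fract_lt_one _⟩
  refine ⟨fun u hu v hv _ hgap => ?_, fun u hu v hv hmax hmin => ?_⟩
  all_goals
    by_contra! hlong
    obtain ⟨k, hk, n, hlow, hhigh⟩ := exists_add_natCast_mul_sub_intCast_mem_Ioo hq hcop happrox x u
  · have hfract : Int.fract (x + (k : ℝ) * α) = x + k * α - n :=
      Int.fract_eq_iff.mpr ⟨by linarith [(hunit u hu).1], by linarith [(hunit v hv).2], n, by ring⟩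
    exact hgap _ (hfract_mem k hk) (hfract ▸ ⟨hlow, by linarith⟩)
  · -- `w ≤ u < w + d < v + 1 ≤ w + 1`, so the integer `d` lies strictly between `0` and `1`.
    set w := Int.fract (x + (k : ℝ) * α)
    obtain ⟨d, hd⟩ : ∃ d : ℤ, x + k * α - n = w + d :=
      ⟨⌊x + (k : ℝ) * α⌋ - n, by simp only [w, Int.fract]; push_cast; ring⟩
    have hwu := hmax w (hfract_mem k hk)
    have hvw := hmin w (hfract_mem k hk)
    have hpos : (0 : ℝ) < d := by linarith
    have hlt : (d : ℝ) < 1 := by linarith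
    have : (0 : ℤ) < d := by exact_mod_cast hpos
    have : d < 1 := by exact_mod_cast hlt
    omega

theorem stmt4 (α : ℝ) (p q : ℕ) (hp : 0 < p) (hq : 0 < q) (hcop : Nat.Coprime p q)
    (happrox : |α - (p : ℝ) / (q : ℝ)| < 1 / (q : ℝ)^2)
    (x : ℝ) (hx : x ∈ Set.Ico (0:ℝ) 1)
    (S : Finset ℝ) (hS : S = (Finset.range q).image (fun k : ℕ => Int.fract (x + (k : ℝ) * α))) :
    -- gaps between consecutive elements of S (in increasing order) are < 2/q …
    (∀ u ∈ S, ∀ v ∈ S, u < v → (∀ w ∈ S, ¬ (u < w ∧ w < v)) → v - u < 2 / (q : ℝ)) ∧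
    -- … including the wrap-around gap on the circle, from the largest to the smallest element
    (∀ u ∈ S, ∀ v ∈ S, (∀ w ∈ S, w ≤ u) → (∀ w ∈ S, v ≤ w) → (v + 1) - u < 2 / (q : ℝ)) :=
  stmt4_general α p q hq hcop happrox x S hS
end

section
/- Let p, q be coprime positive integers with |α − p/q| < 1/q². Then any interval on the circle of length 1/q contains at most two elements of the set { {x + kα} : k = 0, …, q−1 }, for any x. -/
/-!
If two of the points `x + kα` (`k < q`) lie in a common arc of length `1/q`, then their
difference `dα - m` (`0 < |d| < q`) is within `1/q` of an integer, and together with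
`|α - p/q| < 1/q²` this forces the integer `dp - mq` to have absolute value less than `2`.
Coprimality rules out `dp = mq`, so `dp - mq = ±1`. For three points in one arc the three
pairwise values of `kp - m_k q` would then differ pairwise by exactly `1`, which no three
integers do.
-/

open Set

section Approximation

variable {α : ℝ} {p : ℤ} {q : ℕ}

theorem abs_mul_sub_mul_lt_two (hq : 0 < q) (happrox : |α - p / q| < 1 / (q : ℝ) ^ 2)
    {d m : ℤ} (hd : |d| ≤ q) (hdm : |d * α - m| < 1 / q) : |d * p - m * q| < 2 := by
  have hq' : (0 : ℝ) < q := by exact_mod_cast hq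
  have hd' : |(d : ℝ)| ≤ q := by exact_mod_cast hd
  have hsplit : ((d * p - m * q : ℤ) : ℝ) = q * (d * α - m) - d * q * (α - p / q) := by
    push_cast
    field_simp
    ring
  have hfirst : |(q : ℝ) * (d * α - m)| < 1 := by
    rw [abs_mul, abs_of_pos hq']
    calc (q : ℝ) * |d * α - m| < q * (1 / q) := by gcongr
      _ = 1 := by field_simp
  have hsecond : |(d : ℝ) * q * (α - p / q)| < 1 := by
    rw [abs_mul, abs_mul, abs_of_pos hq']
    calc |(d : ℝ)| * q * |α - p / q| ≤ q * q * |α - p / q| := by gcongr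
      _ < q * q * (1 / (q : ℝ) ^ 2) := by gcongr
      _ = 1 := by field_simp
  have hreal : |((d * p - m * q : ℤ) : ℝ)| < 2 := by
    rw [hsplit]
    linarith [abs_sub (q * (d * α - m)) (d * q * (α - p / q))]
  exact_mod_cast hreal

theorem abs_mul_sub_mul_eq_one (hq : 0 < q) (hcop : IsCoprime p q)
    (happrox : |α - p / q| < 1 / (q : ℝ) ^ 2) {d m : ℤ} (hd0 : d ≠ 0) (hd : |d| < q)
    (hdm : |d * α - m| < 1 / q) : |d * p - m * q| = 1 := by
  have hlt := abs_mul_sub_mul_lt_two hq happrox hd.le hdm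
  have hne : d * p - m * q ≠ 0 := by
    intro h
    have hdvd : (q : ℤ) ∣ d := hcop.symm.dvd_of_dvd_mul_right ⟨m, by linarith⟩
    exact hd0 (Int.eq_zero_of_abs_lt_dvd hdvd hd)
  have hpos := abs_pos.2 hne
  omega

theorem abs_sub_eq_one_of_mem_Ico (hq : 0 < q) (hcop : IsCoprime p q)
    (happrox : |α - p / q| < 1 / (q : ℝ) ^ 2) {x t : ℝ} {i j : ℕ} {mi mj : ℤ}
    (hi : i < q) (hj : j < q) (hij : i ≠ j)
    (hmi : x + i * α - mi ∈ Ico t (t + 1 / q)) (hmj : x + j * α - mj ∈ Ico t (t + 1 / q)) :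
    |(i * p - mi * q) - (j * p - mj * q)| = 1 := by
  rw [show (i * p - mi * q) - (j * p - mj * q) = ((i : ℤ) - j) * p - (mi - mj) * q by ring]
  refine abs_mul_sub_mul_eq_one hq hcop happrox (by omega) (Int.abs_sub_lt_of_lt_lt hj hi) ?_
  have hdiff : (((i : ℤ) - j : ℤ) : ℝ) * α - ((mi - mj : ℤ) : ℝ)
      = (x + i * α - mi - t) - (x + j * α - mj - t) := by
    push_cast
    ring
  rw [hdiff]
  exact abs_sub_lt_of_nonneg_of_lt (by linarith [hmi.1]) (by linarith [hmi.2])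
    (by linarith [hmj.1]) (by linarith [hmj.2])

end Approximation

theorem stmt5_general (α : ℝ) (p q : ℕ) (hq : 0 < q) (hcop : Nat.Coprime p q)
    (happrox : |α - (p : ℝ) / (q : ℝ)| < 1 / (q : ℝ)^2) (x : ℝ) :
    -- any interval (arc) of length 1/q on the circle contains at most two of the points
    -- {x + kα}, k = 0, …, q−1
    ∀ t : ℝ,
      Set.ncard {k : ℕ | k < q ∧ ∃ m : ℤ, x + (k : ℝ) * α - (m : ℝ) ∈ Set.Ico t (t + 1 / (q : ℝ))}
        ≤ 2 := by
  intro t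
  have hfin :
      {k : ℕ | k < q ∧ ∃ m : ℤ, x + (k : ℝ) * α - (m : ℝ) ∈ Ico t (t + 1 / (q : ℝ))}.Finite :=
    (finite_Iio q).subset fun k hk => hk.1
  have hcop' : IsCoprime (p : ℤ) q := Nat.isCoprime_iff_coprime.2 hcop
  have happrox' : |α - ((p : ℤ) : ℝ) / q| < 1 / (q : ℝ) ^ 2 := by
    rwa [Int.cast_natCast]
  by_contra! h
  obtain ⟨a, b, c, ⟨ha, ma, hma⟩, ⟨hb, mb, hmb⟩, ⟨hc, mc, hmc⟩, hab, hac, hbc⟩ :=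
    (two_lt_ncard_iff hfin).1 h
  have hab' := abs_sub_eq_one_of_mem_Ico hq hcop' happrox' ha hb hab hma hmb
  have hbc' := abs_sub_eq_one_of_mem_Ico hq hcop' happrox' hb hc hbc hmb hmc
  have hac' := abs_sub_eq_one_of_mem_Ico hq hcop' happrox' ha hc hac hma hmc
  rw [abs_eq zero_le_one] at hab' hbc' hac'
  omega

theorem stmt5 (α : ℝ) (p q : ℕ) (hp : 0 < p) (hq : 0 < q) (hcop : Nat.Coprime p q)
    (happrox : |α - (p : ℝ) / (q : ℝ)| < 1 / (q : ℝ)^2) (x : ℝ) :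
    -- any interval (arc) of length 1/q on the circle contains at most two of the points
    -- {x + kα}, k = 0, …, q−1
    ∀ t : ℝ,
      Set.ncard {k : ℕ | k < q ∧ ∃ m : ℤ, x + (k : ℝ) * α - (m : ℝ) ∈ Set.Ico t (t + 1 / (q : ℝ))}
        ≤ 2 :=
  stmt5_general α p q hq hcop happrox x
end

section
/- Let α be irrational with denominators (q_n) and let β be a real number. If there exists n₀ such that for all n ≥ n₀, min_{0 ≤ |j| < q_n} ‖β − jα‖ < (1/2)‖q_{n+1}α‖, then β ∈ ℤα + ℤ. -/
/-- Denominators of the continued fraction convergents of a real number. -/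
noncomputable def contDen (α : ℝ) (n : ℕ) : ℝ := (GenContFract.of α).dens n

/-- Distance from a real number to the nearest integer. -/
noncomputable def nint (x : ℝ) : ℝ := |x - (round x : ℝ)|

/-- `α` is of bounded type: the partial quotients in its continued fraction expansion
are bounded. -/
def BoundedType (α : ℝ) : Prop :=
  ∃ M : ℝ, ∀ n : ℕ, ∀ b : ℝ, (GenContFract.of α).partDens.get? n = some b → b ≤ M

/-- Membership in the subgroup ℤα + ℤ of ℝ. -/
def InZalphaZ (α β : ℝ) : Prop := ∃ m k : ℤ, β = (m : ℝ) * α + (k : ℝ)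

/-!
Write `δₙ = qₙα - pₙ` for the errors of the convergents. They alternate in sign, satisfy
`δₙ₊₁ = -ξₙ₊₁ δₙ` with `ξₙ₊₁ ∈ (0, 1)`, and `|δₙ| qₙ₊₁ ≤ 1`, so `|δₙ| ↓ 0`; moreover
`‖mα‖ ≥ |δₙ|` whenever `0 < |m| < qₙ₊₁` (best approximation). If the integers `jₙ`, `jₙ₊₁`
given at two consecutive levels differ, then `m = jₙ₊₁ - jₙ` has `0 < |m| < qₙ + qₙ₊₁ ≤ qₙ₊₂`, so
`|δₙ₊₁| ≤ ‖mα‖ ≤ ‖β - jₙα‖ + ‖β - jₙ₊₁α‖ < (|δₙ₊₁| + |δₙ₊₂|) / 2 < |δₙ₊₁|`.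
Hence `jₙ` is eventually a constant `j`, and `‖β - jα‖ < |δₙ| → 0` gives `β - jα ∈ ℤ`.
-/

open Filter Topology

theorem abs_le_abs_add_of_mul_nonneg {G : Type*} [Ring G] [LinearOrder G] [IsStrictOrderedRing G]
    {a b : G} (h : 0 ≤ a * b) : |a| ≤ |a + b| :=
  ((abs_add_eq_add_abs_iff a b).2 (mul_nonneg_iff.1 h)).symm ▸ le_add_of_nonneg_right (abs_nonneg b)

/-- Lagrange's best approximation argument: write `m = x q + y q'`, `r = x p + y p'`; since
`|m| < q'`, the integers `x` and `y` cannot have the same sign, so `x δ` and `y δ'` do. -/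
theorem abs_mul_sub_le_abs_mul_sub_of_isUnit {α : ℝ} {q p q' p' m r : ℤ}
    (hdet : IsUnit (p * q' - q * p')) (hq : 0 ≤ q) (hsign : (q * α - p) * (q' * α - p') ≤ 0)
    (hm : m ≠ 0) (hmq : |m| < q') : |q * α - p| ≤ |m * α - r| := by
  have hd := Int.isUnit_mul_self hdet
  obtain ⟨x, y, rfl, rfl⟩ : ∃ x y : ℤ, x * q + y * q' = m ∧ x * p + y * p' = r :=
    ⟨(p * q' - q * p') * (r * q' - m * p'), (p * q' - q * p') * (m * p - r * q),
      by linear_combination m * hd, by linear_combination r * hd⟩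
  have hq' : 0 < q' := (abs_pos.2 hm).trans hmq
  have hq'_le : ∀ z ≠ 0, 0 ≤ x * z → q' ≤ |x * q + z * q'| := fun z hz hxz => calc
    q' ≤ |z| * q' := le_mul_of_one_le_left hq'.le (Int.one_le_abs hz)
    _ = |z * q'| := by rw [abs_mul, abs_of_pos hq']
    _ ≤ |x * q + z * q'| := by
      rw [add_comm]
      exact abs_le_abs_add_of_mul_nonneg (by nlinarith [mul_nonneg hxz hq, hq'.le])
  have hxy : x * y ≤ 0 := by
    by_contra! hxy
    exact (hq'_le y (right_ne_zero_of_mul hxy.ne') hxy.le).not_gt hmq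
  have hx : x ≠ 0 := by
    rintro rfl
    have hy : y ≠ 0 := by rintro rfl; simp at hm
    exact (hq'_le y hy (zero_mul y).ge).not_gt (by simpa using hmq)
  calc |q * α - p| ≤ |(x : ℝ)| * |q * α - p| :=
        le_mul_of_one_le_left (abs_nonneg _) (by exact_mod_cast Int.one_le_abs hx)
    _ = |x * (q * α - p)| := (abs_mul _ _).symm
    _ ≤ |x * (q * α - p) + y * (q' * α - p')| := abs_le_abs_add_of_mul_nonneg <| by
        have : ((x * y : ℤ) : ℝ) ≤ 0 := by exact_mod_cast hxy
        push_cast at this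
        nlinarith [mul_nonneg_of_nonpos_of_nonpos this hsign]
    _ = |((x * q + y * q' : ℤ) : ℝ) * α - ((x * p + y * p' : ℤ) : ℝ)| := by push_cast; ring_nf

theorem nint_le_abs_sub (x : ℝ) (k : ℤ) : nint x ≤ |x - k| := round_le x k

theorem nint_sub_le (x y : ℝ) : nint (x - y) ≤ nint x + nint y := calc
  nint (x - y) ≤ |x - y - ((round x - round y : ℤ) : ℝ)| := nint_le_abs_sub _ _
  _ = |(x - round x) - (y - round y)| := by push_cast; ring_nf
  _ ≤ nint x + nint y := abs_sub _ _

/-- The convergents `convNum a n / convDen a n` of `[0; a 0, a 1, …]`. -/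
def convDen (a : ℕ → ℤ) : ℕ → ℤ
  | 0 => 1
  | 1 => a 0
  | n + 2 => a (n + 1) * convDen a (n + 1) + convDen a n

def convNum (a : ℕ → ℤ) : ℕ → ℤ
  | 0 => 0
  | 1 => 1
  | n + 2 => a (n + 1) * convNum a (n + 1) + convNum a n

section convDen

variable {a : ℕ → ℤ}

theorem convDen_pos (ha : ∀ n, 0 < a n) : ∀ n, 0 < convDen a n
  | 0 => one_pos
  | 1 => ha 0
  | _ + 2 => add_pos (mul_pos (ha _) (convDen_pos ha _)) (convDen_pos ha _)

theorem convDen_add_le (ha : ∀ n, 0 < a n) (n : ℕ) :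
    convDen a n + convDen a (n + 1) ≤ convDen a (n + 2) := by
  have := le_mul_of_one_le_left (convDen_pos ha (n + 1)).le (ha (n + 1))
  rw [convDen]
  linarith

theorem le_convDen (ha : ∀ n, 0 < a n) : ∀ n : ℕ, (n : ℤ) ≤ convDen a n
  | 0 => (convDen_pos ha 0).le
  | 1 => ha 0
  | n + 2 => by
    have := le_convDen ha (n + 1)
    have := convDen_add_le ha n
    have := convDen_pos ha n
    push_cast at *
    omega

theorem convNum_mul_convDen_sub (a : ℕ → ℤ) :
    ∀ n, convNum a (n + 1) * convDen a n - convNum a n * convDen a (n + 1) = (-1) ^ n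
  | 0 => by simp [convNum, convDen]
  | n + 1 => by
    rw [convNum, convDen, pow_succ]
    linear_combination (-1 : ℤ) * convNum_mul_convDen_sub a n

end convDen

/-- `ξ n` is the fractional part of the `n`-th complete quotient of `α = [0; a 0, a 1, …]`. -/
structure IsContFracExpansion (α : ℝ) (a : ℕ → ℤ) (ξ : ℕ → ℝ) : Prop where
  zero : ξ 0 = α
  mem_Ioo : ∀ n, ξ n ∈ Set.Ioo 0 1
  inv_eq : ∀ n, (ξ n)⁻¹ = a n + ξ (n + 1)

def convErr (a : ℕ → ℤ) (α : ℝ) (n : ℕ) : ℝ := convDen a n * α - convNum a n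

theorem convErr_add_two (a : ℕ → ℤ) (α : ℝ) (n : ℕ) :
    convErr a α (n + 2) = a (n + 1) * convErr a α (n + 1) + convErr a α n := by
  simp only [convErr, convDen, convNum]
  push_cast
  ring

theorem nint_convDen_mul_le (a : ℕ → ℤ) (α : ℝ) (n : ℕ) :
    nint (convDen a n * α) ≤ |convErr a α n| :=
  nint_le_abs_sub _ (convNum a n)

namespace IsContFracExpansion

variable {α : ℝ} {a : ℕ → ℤ} {ξ : ℕ → ℝ} (h : IsContFracExpansion α a ξ)
include h

theorem partialQuotient_pos (n : ℕ) : 0 < a n := by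
  have h₁ := h.mem_Ioo n
  have h₂ := h.mem_Ioo (n + 1)
  have : (1 : ℝ) < (ξ n)⁻¹ := (one_lt_inv₀ h₁.1).2 h₁.2
  have : (0 : ℝ) < a n := by linarith [h.inv_eq n, h₂.2]
  exact_mod_cast this

theorem convErr_succ : ∀ n, convErr a α (n + 1) = -ξ (n + 1) * convErr a α n
  | 0 => by
    have hα : ξ 0 * (ξ 0)⁻¹ = 1 := mul_inv_cancel₀ (h.mem_Ioo 0).1.ne'
    simp only [convErr, convDen, convNum, ← h.zero]
    push_cast
    linear_combination hα - ξ 0 * h.inv_eq 0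
  | n + 1 => by
    have hξ : (ξ (n + 1))⁻¹ * ξ (n + 1) = 1 := inv_mul_cancel₀ (h.mem_Ioo (n + 1)).1.ne'
    rw [convErr_add_two]
    linear_combination (ξ (n + 1))⁻¹ * convErr_succ n - convErr a α (n + 1) * h.inv_eq (n + 1)
      - convErr a α n * hξ

theorem convErr_ne_zero : ∀ n, convErr a α n ≠ 0
  | 0 => by simpa [convErr, convDen, convNum, ← h.zero] using (h.mem_Ioo 0).1.ne'
  | n + 1 => by
    rw [h.convErr_succ]
    exact mul_ne_zero (neg_ne_zero.2 (h.mem_Ioo (n + 1)).1.ne') (convErr_ne_zero n)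

theorem abs_convErr_succ_lt (n : ℕ) : |convErr a α (n + 1)| < |convErr a α n| := by
  rw [h.convErr_succ, abs_mul, abs_neg, abs_of_pos (h.mem_Ioo (n + 1)).1]
  exact mul_lt_of_lt_one_left (abs_pos.2 (h.convErr_ne_zero n)) (h.mem_Ioo (n + 1)).2

theorem convErr_mul_convErr_succ_nonpos (n : ℕ) : convErr a α n * convErr a α (n + 1) ≤ 0 := by
  rw [h.convErr_succ]
  nlinarith [(h.mem_Ioo (n + 1)).1, sq_nonneg (convErr a α n)]

theorem convDen_pos (n : ℕ) : 0 < convDen a n := _root_.convDen_pos h.partialQuotient_pos n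

theorem abs_convErr_mul_convDen_succ_le (n : ℕ) :
    |convErr a α n| * convDen a (n + 1) ≤ 1 := by
  have hdet : convErr a α n * convDen a (n + 1) + -(convErr a α (n + 1) * convDen a n)
      = (-1) ^ n := by
    have := congrArg (Int.cast : ℤ → ℝ) (convNum_mul_convDen_sub a n)
    push_cast at this
    simp only [convErr]
    linear_combination this
  have hsign : 0 ≤ convErr a α n * convDen a (n + 1) * -(convErr a α (n + 1) * convDen a n) := by
    have := mul_pos (h.convDen_pos n) (h.convDen_pos (n + 1))
    have : (0 : ℝ) < convDen a n * convDen a (n + 1) := by exact_mod_cast this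
    nlinarith [h.convErr_mul_convErr_succ_nonpos n]
  calc |convErr a α n| * convDen a (n + 1) = |convErr a α n * convDen a (n + 1)| := by
        rw [abs_mul, abs_of_pos (Int.cast_pos.2 (h.convDen_pos (n + 1)))]
    _ ≤ 1 := by simpa [hdet] using abs_le_abs_add_of_mul_nonneg hsign

theorem tendsto_abs_convErr : Tendsto (fun n => |convErr a α n|) atTop (𝓝 0) := by
  refine squeeze_zero_norm (fun n => ?_) tendsto_one_div_add_atTop_nhds_zero_nat
  have hq : ((n : ℤ) + 1 : ℝ) ≤ convDen a (n + 1) := by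
    exact_mod_cast le_convDen h.partialQuotient_pos (n + 1)
  rw [Real.norm_eq_abs, abs_abs, le_div_iff₀ (by positivity)]
  calc |convErr a α n| * (n + 1) ≤ |convErr a α n| * convDen a (n + 1) := by
        push_cast at hq
        gcongr
    _ ≤ 1 := h.abs_convErr_mul_convDen_succ_le n

theorem abs_convErr_le_nint (n : ℕ) {m : ℤ} (hm : m ≠ 0) (hmq : |m| < convDen a (n + 1)) :
    |convErr a α n| ≤ nint (m * α) := by
  have hdet : IsUnit (convNum a n * convDen a (n + 1) - convDen a n * convNum a (n + 1)) := by
    rw [show convNum a n * convDen a (n + 1) - convDen a n * convNum a (n + 1) = -(-1) ^ n by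
      linear_combination -convNum_mul_convDen_sub a n]
    exact (isUnit_neg_one.pow n).neg
  exact abs_mul_sub_le_abs_mul_sub_of_isUnit hdet (h.convDen_pos n).le
    (h.convErr_mul_convErr_succ_nonpos n) hm hmq

theorem eq_of_nint_sub_lt {β : ℝ} {n : ℕ} {j j' : ℤ}
    (hj : |j| < convDen a n) (hj' : |j'| < convDen a (n + 1))
    (hβ : nint (β - j * α) < 1 / 2 * nint (convDen a (n + 1) * α))
    (hβ' : nint (β - j' * α) < 1 / 2 * nint (convDen a (n + 2) * α)) : j' = j := by
  by_contra hne
  have hm : |j' - j| < convDen a (n + 2) := calc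
    |j' - j| ≤ |j'| + |j| := abs_sub _ _
    _ < convDen a n + convDen a (n + 1) := by linarith
    _ ≤ convDen a (n + 2) := convDen_add_le h.partialQuotient_pos n
  have := calc
    |convErr a α (n + 1)| ≤ nint (((j' - j : ℤ) : ℝ) * α) :=
        h.abs_convErr_le_nint (n + 1) (sub_ne_zero.2 hne) hm
    _ = nint ((β - j * α) - (β - j' * α)) := by push_cast; ring_nf
    _ ≤ nint (β - j * α) + nint (β - j' * α) := nint_sub_le _ _
    _ < 1 / 2 * |convErr a α (n + 1)| + 1 / 2 * |convErr a α (n + 2)| := by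
        linarith [nint_convDen_mul_le a α (n + 1), nint_convDen_mul_le a α (n + 2)]
  linarith [h.abs_convErr_succ_lt (n + 1)]

theorem inZalphaZ {β : ℝ} (hβ : ∃ n₀ : ℕ, ∀ n ≥ n₀, ∃ j : ℤ, |j| < convDen a n ∧
      nint (β - j * α) < 1 / 2 * nint (convDen a (n + 1) * α)) :
    InZalphaZ α β := by
  obtain ⟨n₀, hβ⟩ := hβ
  choose! j hj hβj using hβ
  have hconst : ∀ n ≥ n₀, j n = j n₀ := fun n hn => by
    induction n, hn using Nat.le_induction with
    | base => rfl
    | succ n hn ih =>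
      rw [← ih]
      exact h.eq_of_nint_sub_lt (hj n hn) (hj (n + 1) (by omega)) (hβj n hn)
        (hβj (n + 1) (by omega))
  have hzero : nint (β - j n₀ * α) ≤ 0 := by
    refine ge_of_tendsto h.tendsto_abs_convErr (eventually_atTop.2 ⟨n₀, fun n hn => ?_⟩)
    have := hβj n hn
    rw [hconst n hn] at this
    linarith [nint_convDen_mul_le a α (n + 1), h.abs_convErr_succ_lt n, abs_nonneg (convErr a α n)]
  refine ⟨j n₀, round (β - j n₀ * α), ?_⟩
  have := abs_nonpos_iff.1 hzero
  linarith

end IsContFracExpansion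

open GenContFract in
theorem exists_isContFracExpansion {α : ℝ} (hα : Irrational α) (hα01 : α ∈ Set.Ioo 0 1) :
    ∃ a ξ, IsContFracExpansion α a ξ ∧ ∀ n, (GenContFract.of α).s.get? n = some ⟨1, (a n : ℝ)⟩ := by
  have hstream : ∀ n, ∃ ifp, IntFractPair.stream α n = some ifp
    | 0 => ⟨_, IntFractPair.stream_zero α⟩
    | n + 1 => Option.ne_none_iff_exists'.1 fun hnone => by
      obtain ⟨q, hq⟩ := (terminates_iff_rat α).1
        ⟨n, of_terminatedAt_n_iff_succ_nth_intFractPair_stream_eq_none.2 hnone⟩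
      exact hα ⟨q, hq.symm⟩
  choose ifp hifp using hstream
  have hfr : ∀ n, (ifp n).fr ≠ 0 := fun n h0 => by
    simpa [hifp] using IntFractPair.stream_eq_none_of_fr_eq_zero (hifp n) h0
  have hsucc : ∀ n, ifp (n + 1) = IntFractPair.of (ifp n).fr⁻¹ := fun n =>
    Option.some_inj.1 <|
      (hifp (n + 1)).symm.trans (IntFractPair.stream_succ_of_some (hifp n) (hfr n))
  refine ⟨fun n => (ifp (n + 1)).b, fun n => (ifp n).fr, ⟨?_, fun n => ?_, fun n => ?_⟩,
    fun n => get?_of_eq_some_of_succ_get?_intFractPair_stream (hifp (n + 1))⟩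
  · rw [Option.some_inj.1 ((hifp 0).symm.trans (IntFractPair.stream_zero α))]
    exact Int.fract_eq_self.2 ⟨hα01.1.le, hα01.2⟩
  · have := IntFractPair.nth_stream_fr_nonneg_lt_one (hifp n)
    exact ⟨this.1.lt_of_ne' (hfr n), this.2⟩
  · rw [hsucc n]
    exact (Int.floor_add_fract _).symm

open GenContFract in
theorem contDen_eq_convDen {v : ℝ} {a : ℕ → ℤ}
    (hs : ∀ n, (GenContFract.of v).s.get? n = some ⟨1, (a n : ℝ)⟩) : ∀ n, contDen v n = convDen a n
  | 0 => by simp [contDen, convDen]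
  | 1 => by simp [contDen, first_den_eq (hs 0), convDen]
  | n + 2 => by
    rw [contDen, dens_recurrence (hs (n + 1)) (contDen_eq_convDen hs n)
      (contDen_eq_convDen hs (n + 1))]
    push_cast [convDen]
    ring

theorem stmt8 (α : ℝ) (hα : Irrational α) (hα01 : α ∈ Set.Ioo (0:ℝ) 1) (β : ℝ)
    (h : ∃ n₀ : ℕ, ∀ n ≥ n₀, ∃ j : ℤ, (|j| : ℝ) < contDen α n ∧
      nint (β - (j : ℝ) * α) < (1/2) * nint (contDen α (n+1) * α)) :
    InZalphaZ α β := by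
  obtain ⟨a, ξ, hexp, hs⟩ := exists_isContFracExpansion hα hα01
  obtain ⟨n₀, h⟩ := h
  refine hexp.inZalphaZ ⟨n₀, fun n hn => ?_⟩
  obtain ⟨j, hj, hβ⟩ := h n hn
  rw [contDen_eq_convDen hs] at hj hβ
  exact ⟨j, by exact_mod_cast hj, hβ⟩
end

section
/- Suppose α is irrational of bounded type and β = (t/r)α + (u/s) with integers t, r, u, s, r,s ≥ 1, and β ∉ ℤα + ℤ. Then there exists c > 0 such that for all n ≥ 1 and all integers j with 0 ≤ |j| ≤ q_n, one has ‖β − jα‖ ≥ c/q_n. -/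
/-!
Bounded partial quotients make `α` badly approximable: for `q_n ≤ Q < q_{n+1}`, the convergent
`p_n / q_n` is a best approximation, so `|Qα - P| ≥ |q_n α - p_n| ≥ 1 / (2 q_{n+1})`, and
`q_{n+1} ≤ (M + 1) q_n ≤ (M + 1) Q` when the partial quotients are at most `M`.

Multiplying by `rs` turns `β - jα` into `mα + ru` with `m = s(t - rj)` and `|m| = O(q_n)`, so
`‖β - jα‖ ≥ ‖mα‖ / (rs) ≥ c / q_n` when `m ≠ 0`. When `m = 0`, `β - jα = u / s` is a rational
which is not an integer because `β ∉ ℤα + ℤ`, so it lies at distance at least `1 / s` from `ℤ`.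
-/

theorem abs_mul_sub_le_of_isUnit_det {α : ℝ} {P₀ Q₀ P₁ Q₁ P Q : ℤ}
    (hdet : IsUnit (P₀ * Q₁ - Q₀ * P₁)) (hQ₀ : 0 ≤ Q₀) (hQ : 0 < Q) (hQQ₁ : Q < Q₁)
    (hsign : (Q₀ * α - P₀) * (Q₁ * α - P₁) ≤ 0) :
    |Q₀ * α - P₀| ≤ |Q * α - P| := by
  set d := P₀ * Q₁ - Q₀ * P₁
  have hd : d * d = 1 := Int.isUnit_mul_self hdet
  -- `(a, b)` are the coordinates of `(Q, P)` in the unimodular basis `(Q₀, P₀), (Q₁, P₁)`;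
  -- `0 < Q < Q₁` forces `a ≠ 0` and `a * b ≤ 0`, so both terms below have the same sign.
  set a := d * (P * Q₁ - Q * P₁)
  set b := d * (Q * P₀ - P * Q₀)
  have hQab : a * Q₀ + b * Q₁ = Q := by linear_combination Q * hd
  have hPab : a * P₀ + b * P₁ = P := by linear_combination P * hd
  have hsplit : Q * α - P = a * (Q₀ * α - P₀) + b * (Q₁ * α - P₁) := by
    have hQ' : (a * Q₀ + b * Q₁ : ℝ) = Q := mod_cast hQab
    have hP' : (a * P₀ + b * P₁ : ℝ) = P := mod_cast hPab
    linear_combination -α * hQ' + hP'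
  have ha : a ≠ 0 := by
    rintro ha
    rw [ha, zero_mul, zero_add] at hQab
    rcases le_or_gt b 0 with hb | hb <;> nlinarith
  have hab : a * b ≤ 0 := by
    rcases le_or_gt a 0 with ha' | ha' <;> rcases le_or_gt b 0 with hb | hb <;> nlinarith
  have habR : (a * b : ℝ) ≤ 0 := mod_cast hab
  have hsame : 0 ≤ (a * (Q₀ * α - P₀)) * (b * (Q₁ * α - P₁)) := by
    rw [show (a * (Q₀ * α - P₀)) * (b * (Q₁ * α - P₁)) =
      (a * b : ℝ) * ((Q₀ * α - P₀) * (Q₁ * α - P₁)) by ring]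
    exact mul_nonneg_of_nonpos_of_nonpos habR hsign
  have ha1 : (1 : ℝ) ≤ |(a : ℝ)| := mod_cast Int.one_le_abs ha
  rw [hsplit]
  calc |Q₀ * α - P₀| ≤ |(a : ℝ)| * |Q₀ * α - P₀| := le_mul_of_one_le_left (abs_nonneg _) ha1
    _ = |a * (Q₀ * α - P₀)| := (abs_mul _ _).symm
    _ ≤ |a * (Q₀ * α - P₀) + b * (Q₁ * α - P₁)| := by
        rw [(abs_add_eq_add_abs_iff _ _).mpr (mul_nonneg_iff.mp hsame)]
        exact le_add_of_nonneg_right (abs_nonneg _)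

open GenContFract

namespace Irrational

variable {α : ℝ}

theorem not_terminatedAt (hα : Irrational α) (n : ℕ) : ¬(GenContFract.of α).TerminatedAt n :=
  fun h =>
    let ⟨q, hq⟩ := (terminates_iff_rat α).mp ⟨n, h⟩
    hα ⟨q, hq.symm⟩

theorem exists_intFractPair_stream_fr_pos (hα : Irrational α) (n : ℕ) :
    ∃ ifp, IntFractPair.stream α n = some ifp ∧ 0 < ifp.fr := by
  have h := hα.not_terminatedAt n
  rw [of_terminatedAt_n_iff_succ_nth_intFractPair_stream_eq_none] at h
  obtain ⟨_, hsucc⟩ := Option.ne_none_iff_exists'.mp h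
  obtain ⟨ifp, hifp, hfr, -⟩ := IntFractPair.succ_nth_stream_eq_some_iff.mp hsucc
  exact ⟨ifp, hifp, (IntFractPair.nth_stream_fr_nonneg hifp).lt_of_ne' hfr⟩

theorem exists_s_get?_eq (hα : Irrational α) (n : ℕ) :
    ∃ b : ℤ, 1 ≤ b ∧ (GenContFract.of α).s.get? n = some ⟨1, b⟩ := by
  obtain ⟨⟨a, b⟩, hs⟩ := Option.ne_none_iff_exists'.mp (hα.not_terminatedAt n)
  obtain ⟨rfl, z, rfl⟩ := of_partNum_eq_one_and_exists_int_partDen_eq hs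
  have hz : (1 : ℝ) ≤ z := of_one_le_get?_partDen (partDen_eq_s_b hs)
  exact ⟨z, mod_cast hz, hs⟩

-- `contsAux (k + 1) = conts k`, and `contsAux 0 = ⟨1, 0⟩` plays the role of `(p₋₁, q₋₁)`.
theorem contsAux_add_two (hα : Irrational α) (n : ℕ) :
    ∃ b : ℤ, 1 ≤ b ∧ (GenContFract.of α).partDens.get? n = some (b : ℝ) ∧
      (GenContFract.of α).contsAux (n + 2) =
        ⟨b * ((GenContFract.of α).contsAux (n + 1)).a + ((GenContFract.of α).contsAux n).a,
          b * ((GenContFract.of α).contsAux (n + 1)).b + ((GenContFract.of α).contsAux n).b⟩ := by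
  obtain ⟨b, hb, hs⟩ := hα.exists_s_get?_eq n
  exact ⟨b, hb, partDen_eq_s_b hs, by simpa using contsAux_recurrence hs rfl rfl⟩

theorem exists_int_contsAux (hα : Irrational α) (n : ℕ) :
    ∃ A B : ℤ, (GenContFract.of α).contsAux n = ⟨A, B⟩ := by
  induction n using Nat.twoStepInduction with
  | zero => exact ⟨1, 0, by simp [zeroth_contAux_eq_one_zero]⟩
  | one => exact ⟨⌊α⌋, 1, by simp [first_contAux_eq_h_one, of_h_eq_floor]⟩
  | more n ih₀ ih₁ =>
    obtain ⟨A₀, B₀, h₀⟩ := ih₀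
    obtain ⟨A₁, B₁, h₁⟩ := ih₁
    obtain ⟨b, -, -, h⟩ := hα.contsAux_add_two n
    exact ⟨b * A₁ + A₀, b * B₁ + B₀, by rw [h, h₀, h₁]; push_cast; rfl⟩

theorem exists_int_nums_dens (hα : Irrational α) (n : ℕ) :
    ∃ P Q : ℤ, (GenContFract.of α).nums n = P ∧ (GenContFract.of α).dens n = Q := by
  obtain ⟨P, Q, h⟩ := hα.exists_int_contsAux (n + 1)
  exact ⟨P, Q, by rw [num_eq_conts_a, nth_cont_eq_succ_nth_contAux, h],
    by rw [den_eq_conts_b, nth_cont_eq_succ_nth_contAux, h]⟩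

theorem one_le_dens (hα : Irrational α) (n : ℕ) : 1 ≤ (GenContFract.of α).dens n := by
  have hfib : (1 : ℝ) ≤ Nat.fib (n + 1) := by exact_mod_cast Nat.fib_pos.mpr n.succ_pos
  exact hfib.trans (succ_nth_fib_le_of_nth_den (Or.inr (hα.not_terminatedAt (n - 1))))

theorem dens_pos (hα : Irrational α) (n : ℕ) : 0 < (GenContFract.of α).dens n :=
  one_pos.trans_le (hα.one_le_dens n)

theorem dens_add_two (hα : Irrational α) (n : ℕ) :
    ∃ b : ℤ, 1 ≤ b ∧ (GenContFract.of α).dens (n + 2) =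
      b * (GenContFract.of α).dens (n + 1) + (GenContFract.of α).dens n := by
  obtain ⟨b, hb, -, h⟩ := hα.contsAux_add_two (n + 1)
  exact ⟨b, hb, by simp only [den_eq_conts_b, nth_cont_eq_succ_nth_contAux, h]⟩

theorem dens_succ_le (hα : Irrational α) {M : ℝ}
    (hM : ∀ n b, (GenContFract.of α).partDens.get? n = some b → b ≤ M) (n : ℕ) :
    (GenContFract.of α).dens (n + 1) ≤ (M + 1) * (GenContFract.of α).dens n := by
  obtain ⟨b, -, hpd, h⟩ := hα.contsAux_add_two n
  have hprev : ((GenContFract.of α).contsAux n).b ≤ (GenContFract.of α).dens n := by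
    cases n with
    | zero => simp [zeroth_contAux_eq_one_zero, zeroth_den_eq_one]
    | succ n => exact of_den_mono
  have hdens : (GenContFract.of α).dens (n + 1) =
      b * (GenContFract.of α).dens n + ((GenContFract.of α).contsAux n).b := by
    simp only [den_eq_conts_b, nth_cont_eq_succ_nth_contAux, h]
  rw [hdens]
  nlinarith [hM n b hpd, hα.dens_pos n]

theorem exists_lt_dens (hα : Irrational α) (x : ℝ) : ∃ n, x < (GenContFract.of α).dens n := by
  obtain ⟨n, hn⟩ := exists_nat_gt (max x 5)
  refine ⟨n, (le_max_left _ _).trans_lt (hn.trans_le ?_)⟩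
  have h5 : 5 ≤ n := by exact_mod_cast (le_max_right x 5).trans hn.le
  calc (n : ℝ) ≤ Nat.fib (n + 1) := by
        exact_mod_cast (Nat.le_fib_self h5).trans (Nat.fib_mono n.le_succ)
    _ ≤ (GenContFract.of α).dens n :=
        succ_nth_fib_le_of_nth_den (Or.inr (hα.not_terminatedAt (n - 1)))

theorem exists_dens_le_lt (hα : Irrational α) {x : ℝ} (hx : 1 ≤ x) :
    ∃ n, (GenContFract.of α).dens n ≤ x ∧ x < (GenContFract.of α).dens (n + 1) := by
  classical
  have hex := hα.exists_lt_dens x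
  obtain ⟨n, hn⟩ : ∃ n, Nat.find hex = n + 1 := by
    refine Nat.exists_eq_add_one.mpr (Nat.pos_of_ne_zero fun h0 => ?_)
    have := Nat.find_spec hex
    rw [h0, zeroth_den_eq_one] at this
    linarith
  exact ⟨n, not_lt.mp (Nat.find_min hex (by omega)), hn ▸ Nat.find_spec hex⟩

theorem neg_one_pow_mul_dens_mul_sub_nums_pos (hα : Irrational α) (n : ℕ) :
    0 < (-1) ^ n * ((GenContFract.of α).dens n * α - (GenContFract.of α).nums n) := by
  obtain ⟨ifp, hifp, hfr⟩ := hα.exists_intFractPair_stream_fr_pos n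
  have herr := sub_convs_eq hifp
  simp only [if_neg hfr.ne', conv_eq_num_div_den] at herr
  have hq := hα.dens_pos n
  have hq' : 0 ≤ ((GenContFract.of α).contsAux n).b := zero_le_of_contsAux_b
  set q := (GenContFract.of α).dens n
  set q' := ((GenContFract.of α).contsAux n).b
  set p := (GenContFract.of α).nums n
  -- `herr` is the exact error `α - p_n / q_n = (-1)^n / (q_n (ξ q_n + q_{n-1}))`, `ξ = ifp.fr⁻¹`
  change α - p / q = (-1) ^ n / (q * (ifp.fr⁻¹ * q + q')) at herr
  have hsq : (-1 : ℝ) ^ (n * 2) = 1 := Even.neg_one_pow ⟨n, by ring⟩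
  have : (-1) ^ n * (q * α - p) = 1 / (ifp.fr⁻¹ * q + q') := by
    rw [sub_eq_iff_eq_add.mp herr]
    field_simp
    linear_combination ifp.fr * hsq
  rw [this]
  positivity

theorem dens_mul_sub_nums_mul_succ_neg (hα : Irrational α) (n : ℕ) :
    ((GenContFract.of α).dens n * α - (GenContFract.of α).nums n) *
      ((GenContFract.of α).dens (n + 1) * α - (GenContFract.of α).nums (n + 1)) < 0 := by
  have h := mul_pos (hα.neg_one_pow_mul_dens_mul_sub_nums_pos n)
    (hα.neg_one_pow_mul_dens_mul_sub_nums_pos (n + 1))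
  rw [pow_succ] at h
  nlinarith [pow_mul_pow_eq_one n (show (-1 : ℝ) * (-1) = 1 by norm_num)]

theorem abs_dens_mul_sub_nums_le (hα : Irrational α) (n : ℕ) :
    |(GenContFract.of α).dens n * α - (GenContFract.of α).nums n| ≤
      1 / (GenContFract.of α).dens (n + 1) := by
  have hq := hα.dens_pos n
  have h := abs_sub_convs_le (hα.not_terminatedAt n)
  rw [conv_eq_num_div_den] at h
  calc |(GenContFract.of α).dens n * α - (GenContFract.of α).nums n|
      = (GenContFract.of α).dens n *
          |α - (GenContFract.of α).nums n / (GenContFract.of α).dens n| := by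
        rw [← abs_of_pos hq, ← abs_mul, abs_of_pos hq]; congr 1; field_simp
    _ ≤ (GenContFract.of α).dens n *
          (1 / ((GenContFract.of α).dens n * (GenContFract.of α).dens (n + 1))) := by gcongr
    _ = 1 / (GenContFract.of α).dens (n + 1) := by field_simp

theorem nums_mul_dens_succ_sub_dens_mul_nums_succ (hα : Irrational α) (n : ℕ) :
    (GenContFract.of α).nums n * (GenContFract.of α).dens (n + 1) -
      (GenContFract.of α).dens n * (GenContFract.of α).nums (n + 1) = (-1) ^ (n + 1) :=
  SimpContFract.determinant (s := SimpContFract.of α) (hα.not_terminatedAt n)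

theorem two_mul_dens_le_dens_add_two (hα : Irrational α) (n : ℕ) :
    2 * (GenContFract.of α).dens n ≤ (GenContFract.of α).dens (n + 2) := by
  obtain ⟨b, hb, h⟩ := hα.dens_add_two n
  have hmono : (GenContFract.of α).dens n ≤ (GenContFract.of α).dens (n + 1) := of_den_mono
  have hb' : (1 : ℝ) ≤ b := mod_cast hb
  rw [h]
  nlinarith [hα.dens_pos (n + 1)]

theorem one_div_two_mul_dens_le_abs (hα : Irrational α) (n : ℕ) :
    1 / (2 * (GenContFract.of α).dens (n + 1)) ≤
      |(GenContFract.of α).dens n * α - (GenContFract.of α).nums n| := by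
  have hdet := hα.nums_mul_dens_succ_sub_dens_mul_nums_succ n
  have hq₀ := hα.dens_pos n
  have hq₁ := hα.dens_pos (n + 1)
  have hq₂ := hα.dens_pos (n + 2)
  have hgrowth := hα.two_mul_dens_le_dens_add_two n
  have hnext := hα.abs_dens_mul_sub_nums_le (n + 1)
  set q := (GenContFract.of α).dens
  set p := (GenContFract.of α).nums
  have hnext' : q n * |q (n + 1) * α - p (n + 1)| ≤ 1 / 2 := by
    calc q n * |q (n + 1) * α - p (n + 1)| ≤ q n * (1 / q (n + 2)) := by gcongr
      _ ≤ 1 / 2 := by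
          rw [mul_one_div, div_le_div_iff₀ hq₂ two_pos]
          linarith
  have hone : 1 ≤ q (n + 1) * |q n * α - p n| + q n * |q (n + 1) * α - p (n + 1)| := by
    calc (1 : ℝ) = |q (n + 1) * (q n * α - p n) - q n * (q (n + 1) * α - p (n + 1))| := by
          rw [show q (n + 1) * (q n * α - p n) - q n * (q (n + 1) * α - p (n + 1)) =
            -(p n * q (n + 1) - q n * p (n + 1)) by ring, hdet]
          simp
      _ ≤ |q (n + 1) * (q n * α - p n)| + |q n * (q (n + 1) * α - p (n + 1))| := abs_sub _ _
      _ = _ := by rw [abs_mul, abs_mul, abs_of_pos hq₁, abs_of_pos hq₀]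
  rw [div_le_iff₀ (by positivity)]
  linarith

theorem abs_dens_mul_sub_nums_le_abs_mul_sub (hα : Irrational α) (n : ℕ) {P Q : ℤ} (hQ : 0 < Q)
    (hQn : (Q : ℝ) < (GenContFract.of α).dens (n + 1)) :
    |(GenContFract.of α).dens n * α - (GenContFract.of α).nums n| ≤ |Q * α - P| := by
  obtain ⟨P₀, Q₀, hP₀, hQ₀⟩ := hα.exists_int_nums_dens n
  obtain ⟨P₁, Q₁, hP₁, hQ₁⟩ := hα.exists_int_nums_dens (n + 1)
  have hdet := hα.nums_mul_dens_succ_sub_dens_mul_nums_succ n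
  have hsign := hα.dens_mul_sub_nums_mul_succ_neg n
  have hpos := hα.dens_pos n
  rw [hP₀, hQ₀, hP₁, hQ₁] at hdet hsign
  rw [hQ₀] at hpos
  rw [hQ₁] at hQn
  have hdetℤ : P₀ * Q₁ - Q₀ * P₁ = (-1) ^ (n + 1) := mod_cast hdet
  rw [hP₀, hQ₀]
  exact abs_mul_sub_le_of_isUnit_det (hdetℤ ▸ isUnit_neg_one.pow _) (mod_cast hpos.le)
    hQ (mod_cast hQn) hsign.le

end Irrational

def BadlyApproximable (α : ℝ) : Prop :=
  ∃ c > 0, ∀ m : ℤ, m ≠ 0 → c / |(m : ℝ)| ≤ nint (m * α)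

theorem BoundedType.badlyApproximable {α : ℝ} (hbdd : BoundedType α) (hα : Irrational α) :
    BadlyApproximable α := by
  obtain ⟨M, hM⟩ := hbdd
  have hM₀ : 0 ≤ M := by
    obtain ⟨b, hb, hpd, -⟩ := hα.contsAux_add_two 0
    have : (1 : ℝ) ≤ b := mod_cast hb
    linarith [hM 0 b hpd]
  have key : ∀ Q P : ℤ, 0 < Q → 1 / (2 * (M + 1)) / Q ≤ |Q * α - P| := by
    intro Q P hQ
    have hQ' : (1 : ℝ) ≤ Q := mod_cast hQ
    obtain ⟨n, hn, hn'⟩ := hα.exists_dens_le_lt hQ'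
    have hgrowth := hα.dens_succ_le hM n
    calc 1 / (2 * (M + 1)) / Q = 1 / (2 * ((M + 1) * Q)) := by field_simp
      _ ≤ 1 / (2 * (GenContFract.of α).dens (n + 1)) := by
          have := hα.dens_pos (n + 1)
          gcongr
          nlinarith
      _ ≤ |(GenContFract.of α).dens n * α - (GenContFract.of α).nums n| :=
          hα.one_div_two_mul_dens_le_abs n
      _ ≤ |Q * α - P| := hα.abs_dens_mul_sub_nums_le_abs_mul_sub n hQ hn'
  refine ⟨1 / (2 * (M + 1)), by positivity, fun m hm => ?_⟩
  rcases hm.lt_or_gt with hm | hm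
  · have h := key (-m) (-round (m * α)) (neg_pos.mpr hm)
    unfold nint
    rw [abs_of_neg (Int.cast_lt_zero.mpr hm)]
    rw [← abs_neg] at h
    push_cast at h
    convert h using 2
    ring
  · unfold nint
    rw [abs_of_pos (Int.cast_pos.mpr hm)]
    exact key m _ hm

theorem nint_add_intCast (x : ℝ) (k : ℤ) : nint (x + k) = nint x := by
  unfold nint
  rw [round_add_intCast, Int.cast_add, add_sub_add_right_eq_sub]

theorem nint_intCast_mul_le (N : ℤ) (x : ℝ) : nint (N * x) ≤ |(N : ℝ)| * nint x :=
  calc nint (N * x) ≤ |N * x - ((N * round x : ℤ) : ℝ)| := round_le _ _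
    _ = |(N : ℝ)| * nint x := by rw [nint, Int.cast_mul, ← mul_sub, abs_mul]

theorem one_div_le_nint_intCast_div {u : ℤ} {s : ℕ} (hs : 0 < s) (hu : ¬(s : ℤ) ∣ u) :
    1 / s ≤ nint (u / s) := by
  have hsR : (0 : ℝ) < s := mod_cast hs
  set k := round ((u : ℝ) / s)
  have hne : u - s * k ≠ 0 := fun h => hu ⟨k, sub_eq_zero.mp h⟩
  have hone : (1 : ℝ) ≤ |((u - s * k : ℤ) : ℝ)| := mod_cast Int.one_le_abs hne
  calc 1 / (s : ℝ) ≤ |((u - s * k : ℤ) : ℝ)| / s := by gcongr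
    _ = nint (u / s) := by
        rw [nint, ← abs_of_pos hsR, ← abs_div, abs_of_pos hsR]
        congr 1
        push_cast
        field_simp
        rfl

theorem BadlyApproximable.exists_div_le_nint_sub_mul {α β : ℝ} (hα : BadlyApproximable α)
    {t u : ℤ} {r s : ℕ} (hr : 0 < r) (hs : 0 < s) (hβ : β = t / r * α + u / s)
    (hβ' : ¬InZalphaZ α β) :
    ∃ c > 0, ∀ Q : ℝ, 1 ≤ Q → ∀ j : ℤ, |(j : ℝ)| ≤ Q → c / Q ≤ nint (β - j * α) := by
  obtain ⟨c₀, hc₀, hbad⟩ := hα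
  have hrR : (0 : ℝ) < r := mod_cast hr
  have hsR : (0 : ℝ) < s := mod_cast hs
  set K : ℝ := s * |(t : ℝ)| + r * s
  have hK : 0 < K := by positivity
  refine ⟨min (1 / s : ℝ) (c₀ / (r * s * K)), by positivity, fun Q hQ j hj => ?_⟩
  have hQ₀ : 0 < Q := one_pos.trans_le hQ
  by_cases htj : t = r * j
  · have hβj : β - j * α = u / s := by
      rw [hβ, htj]
      push_cast
      field_simp
      ring
    have hu : ¬(s : ℤ) ∣ u := by
      rintro ⟨k, rfl⟩
      refine hβ' ⟨j, k, ?_⟩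
      rw [← sub_eq_iff_eq_add', hβj]
      push_cast
      field_simp
    calc min (1 / s : ℝ) (c₀ / (r * s * K)) / Q ≤ min (1 / s : ℝ) (c₀ / (r * s * K)) :=
          div_le_self (by positivity) hQ
      _ ≤ 1 / s := min_le_left _ _
      _ ≤ nint (β - j * α) := hβj ▸ one_div_le_nint_intCast_div hs hu
  · set m : ℤ := s * (t - r * j)
    have hm : m ≠ 0 := mul_ne_zero (by omega) (sub_ne_zero.mpr htj)
    have hmR : (0 : ℝ) < |(m : ℝ)| := abs_pos.mpr (Int.cast_ne_zero.mpr hm)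
    have hscale : ((r * s : ℤ) : ℝ) * (β - j * α) = m * α + (r * u : ℤ) := by
      rw [hβ]
      push_cast [m]
      field_simp
      ring
    have hmQ : |(m : ℝ)| ≤ K * Q := by
      calc |(m : ℝ)| = s * |t - r * (j : ℝ)| := by
            push_cast [m]
            rw [abs_mul, Nat.abs_cast]
        _ ≤ s * (|(t : ℝ)| + r * |(j : ℝ)|) := by
            gcongr
            refine (abs_sub _ _).trans_eq ?_
            rw [abs_mul, Nat.abs_cast]
        _ ≤ K * Q := by
            have ht : s * |(t : ℝ)| ≤ s * |(t : ℝ)| * Q := le_mul_of_one_le_right (by positivity) hQ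
            have hj' : r * s * |(j : ℝ)| ≤ r * s * Q := by gcongr
            linarith
    calc min (1 / s : ℝ) (c₀ / (r * s * K)) / Q ≤ c₀ / (r * s * K) / Q := by
          gcongr
          exact min_le_right _ _
      _ = c₀ / (K * Q) / (r * s) := by field_simp
      _ ≤ c₀ / |(m : ℝ)| / (r * s) := by gcongr
      _ ≤ nint (m * α) / (r * s) := by gcongr; exact hbad m hm
      _ = nint (((r * s : ℤ) : ℝ) * (β - j * α)) / (r * s) := by rw [hscale, nint_add_intCast]
      _ ≤ nint (β - j * α) := by
          rw [div_le_iff₀ (by positivity)]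
          refine (nint_intCast_mul_le _ _).trans_eq ?_
          push_cast
          rw [abs_of_pos (by positivity), mul_comm]

theorem stmt10_general (α : ℝ) (hα : Irrational α)
    (hbdd : BoundedType α) (β : ℝ) (t u : ℤ) (r s : ℕ) (hr : 1 ≤ r) (hs : 1 ≤ s)
    (hβ : β = ((t : ℝ) / (r : ℝ)) * α + (u : ℝ) / (s : ℝ)) (hβ' : ¬ InZalphaZ α β) :
    ∃ c > (0:ℝ), ∀ n : ℕ, 1 ≤ n → ∀ j : ℤ, (|j| : ℝ) ≤ contDen α n →
      nint (β - (j : ℝ) * α) ≥ c / contDen α n := by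
  obtain ⟨c, hc, hbound⟩ := (hbdd.badlyApproximable hα).exists_div_le_nint_sub_mul hr hs hβ hβ'
  exact ⟨c, hc, fun n _ j hj => hbound _ (hα.one_le_dens n) j hj⟩

theorem stmt10 (α : ℝ) (hα : Irrational α) (hα01 : α ∈ Set.Ioo (0:ℝ) 1)
    (hbdd : BoundedType α) (β : ℝ) (t u : ℤ) (r s : ℕ) (hr : 1 ≤ r) (hs : 1 ≤ s)
    (hβ : β = ((t : ℝ) / (r : ℝ)) * α + (u : ℝ) / (s : ℝ)) (hβ' : ¬ InZalphaZ α β) :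
    ∃ c > (0:ℝ), ∀ n : ℕ, 1 ≤ n → ∀ j : ℤ, (|j| : ℝ) ≤ contDen α n →
      nint (β - (j : ℝ) * α) ≥ c / contDen α n :=
  stmt10_general α hα hbdd β t u r s hr hs hβ hβ'
end

section
/- If α is of bounded type and β is a real number with lim_n ‖q_n β‖ = 0, then β ∈ ℤα + ℤ. -/
section aux

open GenContFract

lemma aux_den_rec (α : ℝ) (n : ℕ) {b : ℝ}
    (hb : (GenContFract.of α).partDens.get? (n+1) = some b) :
    (GenContFract.of α).dens (n+2) = b * (GenContFract.of α).dens (n+1) +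
      (GenContFract.of α).dens n := by
  obtain ⟨gp, hs, hgpb⟩ := exists_s_b_of_partDen hb
  have ha : gp.a = 1 := of_partNum_eq_one (partNum_eq_s_a hs)
  have := dens_recurrence hs rfl rfl
  rw [this, ha, hgpb]; ring

lemma aux_num_rec (α : ℝ) (n : ℕ) {b : ℝ}
    (hb : (GenContFract.of α).partDens.get? (n+1) = some b) :
    (GenContFract.of α).nums (n+2) = b * (GenContFract.of α).nums (n+1) +
      (GenContFract.of α).nums n := by
  obtain ⟨gp, hs, hgpb⟩ := exists_s_b_of_partDen hb
  have ha : gp.a = 1 := of_partNum_eq_one (partNum_eq_s_a hs)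
  have := nums_recurrence hs rfl rfl
  rw [this, ha, hgpb]; ring

lemma aux_not_term (α : ℝ) (hα : Irrational α) (n : ℕ) :
    ¬ (GenContFract.of α).TerminatedAt n := by
  intro hterm
  obtain ⟨q, hq⟩ := (GenContFract.terminates_iff_rat α).1 ⟨n, hterm⟩
  exact hα ⟨q, hq.symm⟩

end aux

theorem stmt12 (α : ℝ) (hα : Irrational α) (hα01 : α ∈ Set.Ioo (0:ℝ) 1)
    (hbdd : BoundedType α) (β : ℝ)
    (h : Filter.Tendsto (fun n : ℕ => nint (contDen α n * β)) Filter.atTop (nhds 0)) :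
    InZalphaZ α β := by
  classical
  set g := GenContFract.of α with hg
  have hnt : ∀ n, ¬ g.TerminatedAt n := aux_not_term α hα
  -- the partial denominators
  have hbex : ∀ n, ∃ b : ℝ, g.partDens.get? n = some b := by
    intro n
    rcases Option.eq_none_or_eq_some (g.partDens.get? n) with h0 | ⟨b, hb⟩
    · exact absurd (GenContFract.terminatedAt_iff_partDen_none.2 h0) (hnt n)
    · exact ⟨b, hb⟩
  choose b hb using hbex
  have hb1 : ∀ n, (1:ℝ) ≤ b n := fun n => GenContFract.of_one_le_get?_partDen (hb n)
  -- they are integers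
  have hbint : ∀ n, ∃ z : ℤ, b n = (z : ℝ) := fun n =>
    GenContFract.exists_int_eq_of_partDen (hb n)
  choose B hB using hbint
  obtain ⟨M, hM⟩ := hbdd
  have hbM : ∀ n, b n ≤ M := fun n => hM n (b n) (hb n)
  -- abbreviations
  set q : ℕ → ℝ := fun n => g.dens n with hq
  set p : ℕ → ℝ := fun n => g.nums n with hp
  have hqrec : ∀ n, q (n+2) = b (n+1) * q (n+1) + q n := fun n => aux_den_rec α n (hb (n+1))
  have hprec : ∀ n, p (n+2) = b (n+1) * p (n+1) + p n := fun n => aux_num_rec α n (hb (n+1))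
  -- integrality of numerators and denominators
  have hint : ∀ n, (∃ z : ℤ, p n = (z:ℝ)) ∧ (∃ z : ℤ, q n = (z:ℝ)) := by
    intro n
    induction n using Nat.twoStepInduction with
    | zero =>
      refine ⟨⟨⌊α⌋, ?_⟩, ⟨1, ?_⟩⟩
      · show g.nums 0 = _
        rw [GenContFract.zeroth_num_eq_h, hg, GenContFract.of_h_eq_floor]
      · show g.dens 0 = _
        rw [GenContFract.zeroth_den_eq_one]; norm_num
    | one =>
      obtain ⟨gp, hs, hgpb⟩ := GenContFract.exists_s_b_of_partDen (hb 0)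
      have ha : gp.a = 1 := GenContFract.of_partNum_eq_one (GenContFract.partNum_eq_s_a hs)
      refine ⟨⟨B 0 * ⌊α⌋ + 1, ?_⟩, ⟨B 0, ?_⟩⟩
      · show g.nums 1 = _
        rw [GenContFract.first_num_eq hs, hgpb, hB 0, ha, hg, GenContFract.of_h_eq_floor]
        push_cast; ring
      · show g.dens 1 = _
        rw [GenContFract.first_den_eq hs, hgpb, hB 0]
    | more n ih1 ih2 =>
      obtain ⟨⟨zp, hzp⟩, ⟨zq, hzq⟩⟩ := ih1
      obtain ⟨⟨wp, hwp⟩, ⟨wq, hwq⟩⟩ := ih2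
      refine ⟨⟨B (n+1) * wp + zp, ?_⟩, ⟨B (n+1) * wq + zq, ?_⟩⟩
      · rw [hprec n, hwp, hzp, hB (n+1)]; push_cast; ring
      · rw [hqrec n, hwq, hzq, hB (n+1)]; push_cast; ring
  choose P hP using fun n => (hint n).1
  choose Q hQ using fun n => (hint n).2
  -- lower bounds on denominators
  have hq1 : ∀ n, (1:ℝ) ≤ q n := by
    intro n
    have hfib : ((Nat.fib (n+1) : ℝ)) ≤ q n := by
      apply GenContFract.succ_nth_fib_le_of_nth_den
      rcases n with _ | n
      · exact Or.inl rfl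
      · exact Or.inr (hnt n)
    have : (1:ℕ) ≤ Nat.fib (n+1) := Nat.fib_pos.2 (Nat.succ_pos n)
    calc (1:ℝ) ≤ (Nat.fib (n+1) : ℝ) := by exact_mod_cast this
      _ ≤ q n := hfib
  have hqgrow : ∀ n : ℕ, (n : ℝ) ≤ q (n+1) := by
    intro n
    induction n with
    | zero => simpa using le_trans zero_le_one (hq1 1)
    | succ n ih =>
      have := hqrec n
      have h1 : q (n+1) + q n ≤ b (n+1) * q (n+1) + q n := by
        have := hq1 (n+1)
        nlinarith [hb1 (n+1), hq1 (n+1)]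
      push_cast
      calc (n:ℝ) + 1 ≤ q (n+1) + 1 := by linarith [ih]
        _ ≤ q (n+1) + q n := by linarith [hq1 n]
        _ ≤ q (n+2) := by rw [hqrec n]; exact h1
  have hqpos : ∀ n, (0:ℝ) < q n := fun n => lt_of_lt_of_le zero_lt_one (hq1 n)
  have hqtop : Filter.Tendsto q Filter.atTop Filter.atTop := by
    have h1 : Filter.Tendsto (fun n : ℕ => (n:ℝ) + (-1)) Filter.atTop Filter.atTop :=
      Filter.tendsto_atTop_add_const_right _ (-1) tendsto_natCast_atTop_atTop
    refine Filter.tendsto_atTop_mono (fun n => ?_) h1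
    rcases n with _ | n
    · simpa using le_trans (by norm_num : (0:ℝ) + (-1) ≤ 1) (hq1 0)
    · have := hqgrow n
      push_cast
      linarith
  -- the approximation δ n = α * q n - p n  tends to 0
  set δ : ℕ → ℝ := fun n => α * q n - p n with hδ
  have hδbound : ∀ n, |δ n| ≤ 1 / q (n+1) := by
    intro n
    have habs := GenContFract.abs_sub_convs_le (hnt n) (v := α)
    rw [GenContFract.conv_eq_num_div_den] at habs
    have hqn := hqpos n
    have hqn1 := hqpos (n+1)
    have : |α - p n / q n| ≤ 1 / (q n * q (n+1)) := habs
    have hmul : |α - p n / q n| * q n ≤ (1 / (q n * q (n+1))) * q n :=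
      mul_le_mul_of_nonneg_right this (le_of_lt hqn)
    have heq : |α - p n / q n| * q n = |δ n| := by
      have hδeq : δ n = (α - p n / q n) * q n := by
        rw [hδ]; field_simp
      rw [hδeq, abs_mul, abs_of_pos hqn]
    rw [heq] at hmul
    calc |δ n| ≤ (1 / (q n * q (n+1))) * q n := hmul
      _ = 1 / q (n+1) := by field_simp
  have hδ0 : Filter.Tendsto δ Filter.atTop (nhds 0) := by
    apply squeeze_zero_norm' _ tendsto_one_div_atTop_nhds_zero_nat
    filter_upwards [Filter.eventually_ge_atTop 1] with n hn
    have h1 : (n:ℝ) ≤ q (n+1) := hqgrow n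
    have h2 : (0:ℝ) < n := by exact_mod_cast hn
    calc ‖δ n‖ = |δ n| := rfl
      _ ≤ 1 / q (n+1) := hδbound n
      _ ≤ 1 / n := by apply one_div_le_one_div_of_le h2 h1
  -- ε n and r n
  set r : ℕ → ℤ := fun n => round (q n * β) with hr
  set ε : ℕ → ℝ := fun n => q n * β - r n with hε
  have hε0 : Filter.Tendsto (fun n => |ε n|) Filter.atTop (nhds 0) := by
    have heq : (fun n => |ε n|) = fun n : ℕ => nint (contDen α n * β) := by
      funext n
      simp [hε, hr, nint, contDen, hq, hg]
    rw [heq]; exact h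
  have hεε0 : Filter.Tendsto ε Filter.atTop (nhds 0) :=
    squeeze_zero_norm (fun n => le_refl |ε n|) hε0
  -- eventually the integer recurrence for r holds
  set M' : ℝ := max M 1 with hM'
  have hM'1 : (1:ℝ) ≤ M' := le_max_right _ _
  have hbM' : ∀ n, b n ≤ M' := fun n => le_trans (hbM n) (le_max_left _ _)
  have hδpos : (0:ℝ) < 1 / (M' + 3) := by positivity
  have hev : ∀ᶠ n in Filter.atTop, |ε n| < 1 / (M' + 3) :=
    hε0.eventually (gt_mem_nhds hδpos)
  obtain ⟨N, hN⟩ := Filter.eventually_atTop.1 hev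
  have hrrec : ∀ n, N ≤ n → r (n+2) = B (n+1) * r (n+1) + r n := by
    intro n hn
    have e2 : |ε (n+2)| < 1 / (M' + 3) := hN (n+2) (by omega)
    have e1 : |ε (n+1)| < 1 / (M' + 3) := hN (n+1) (by omega)
    have e0 : |ε n| < 1 / (M' + 3) := hN n hn
    set d : ℤ := r (n+2) - B (n+1) * r (n+1) - r n with hd
    have hcast : (d : ℝ) = ε n + b (n+1) * ε (n+1) - ε (n+2) := by
      have hrn : ∀ m, (r m : ℝ) = q m * β - ε m := by intro m; simp [hε]
      push_cast [hd]
      rw [hrn, hrn, hrn, ← hB (n+1), hqrec n]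
      ring
    have hbpos : (0:ℝ) ≤ b (n+1) := le_trans zero_le_one (hb1 (n+1))
    have habsd : |(d:ℝ)| < 1 := by
      have : |(d:ℝ)| ≤ |ε n| + b (n+1) * |ε (n+1)| + |ε (n+2)| := by
        rw [hcast]
        calc |ε n + b (n+1) * ε (n+1) - ε (n+2)| ≤ |ε n + b (n+1) * ε (n+1)| + |ε (n+2)| :=
              abs_sub _ _
          _ ≤ |ε n| + |b (n+1) * ε (n+1)| + |ε (n+2)| := by
              have := abs_add_le (ε n) (b (n+1) * ε (n+1)); linarith
          _ = |ε n| + b (n+1) * |ε (n+1)| + |ε (n+2)| := by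
              rw [abs_mul, abs_of_nonneg hbpos]
      have hb' : b (n+1) * |ε (n+1)| ≤ M' * (1 / (M' + 3)) := by
        apply mul_le_mul (hbM' (n+1)) (le_of_lt e1) (abs_nonneg _) (by linarith)
      have : |(d:ℝ)| ≤ 1/(M'+3) + M' * (1/(M'+3)) + 1/(M'+3) := by linarith
      have hlt : 1/(M'+3) + M' * (1/(M'+3)) + 1/(M'+3) < 1 := by
        have hsum : 1/(M'+3) + M' * (1/(M'+3)) + 1/(M'+3) = (M'+2)/(M'+3) := by
          field_simp
          ring
        rw [hsum, div_lt_one (by linarith)]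
        linarith
      linarith
    have hcd : ((|d| : ℤ) : ℝ) < 1 := by rw [Int.cast_abs]; exact habsd
    have hd1 : |d| < 1 := by exact_mod_cast hcd
    rw [abs_lt] at hd1
    have hd0 : d = 0 := by omega
    omega
  -- determinant at N
  have hdet : p N * q (N+1) - q N * p (N+1) = (-1:ℝ)^(N+1) :=
    (SimpContFract.of α).determinant (hnt N)
  set e : ℤ := Q N * P (N+1) - P N * Q (N+1) with he
  have hee : e * e = 1 := by
    have : (e:ℝ) = -(-1:ℝ)^(N+1) := by
      push_cast [he]
      rw [← hP, ← hQ, ← hP, ← hQ]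
      linarith [hdet]
    have he' : e = -(-1:ℤ)^(N+1) := by
      apply_fun ((↑) : ℤ → ℝ)
      · push_cast; exact this
      · exact Int.cast_injective
    rw [he']
    rcases Nat.even_or_odd (N+1) with hpar | hpar
    · rw [hpar.neg_one_pow]; ring
    · rw [hpar.neg_one_pow]; ring
  set A : ℤ := e * (r N * P (N+1) - r (N+1) * P N) with hA
  set Bc : ℤ := e * (Q N * r (N+1) - Q (N+1) * r N) with hBc
  have hbase0 : r N = A * Q N + Bc * P N := by
    have : A * Q N + Bc * P N = (e * e) * r N +
        e * (r (N+1) * (Q N * P N - P N * Q N)) := by rw [hA, hBc, he]; ring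
    rw [this, hee]; ring
  have hbase1 : r (N+1) = A * Q (N+1) + Bc * P (N+1) := by
    have : A * Q (N+1) + Bc * P (N+1) = (e * e) * r (N+1) +
        e * (r N * (P (N+1) * Q (N+1) - Q (N+1) * P (N+1))) := by rw [hA, hBc, he]; ring
    rw [this, hee]; ring
  -- integer recurrences for P and Q
  have hQrec : ∀ n, Q (n+2) = B (n+1) * Q (n+1) + Q n := by
    intro n
    apply Int.cast_injective (α := ℝ)
    push_cast
    rw [← hQ, ← hQ, ← hQ, ← hB, hqrec n]
  have hPrec : ∀ n, P (n+2) = B (n+1) * P (n+1) + P n := by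
    intro n
    apply Int.cast_injective (α := ℝ)
    push_cast
    rw [← hP, ← hP, ← hP, ← hB, hprec n]
  -- r n = A * Q n + Bc * P n for all n ≥ N
  have hrall : ∀ j : ℕ, r (N + j) = A * Q (N + j) + Bc * P (N + j) := by
    intro j
    induction j using Nat.twoStepInduction with
    | zero => simpa using hbase0
    | one => simpa using hbase1
    | more j ih1 ih2 =>
      have hNj : N + (j+2) = (N + j) + 2 := by ring
      rw [hNj, hrrec (N+j) (Nat.le_add_right N j), hQrec (N+j), hPrec (N+j),
        show N + j + 1 = N + (j+1) by ring, ih1, ih2]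
      ring
  -- conclude
  set γ : ℝ := β - (Bc : ℝ) * α - (A : ℝ) with hγ
  have hkey : ∀ j : ℕ, q (N + j) * γ = ε (N + j) - (Bc:ℝ) * δ (N + j) := by
    intro j
    have h1 : (r (N+j) : ℝ) = (A:ℝ) * q (N+j) + (Bc:ℝ) * p (N+j) := by
      rw [hrall j]; push_cast; rw [← hQ, ← hP]
    have h2 : ε (N+j) = q (N+j) * β - r (N+j) := rfl
    rw [h2, h1, hγ, hδ]
    ring
  have htend : Filter.Tendsto (fun n => q n * γ) Filter.atTop (nhds 0) := by
    have htt : Filter.Tendsto (fun n => ε n - (Bc:ℝ) * δ n) Filter.atTop (nhds 0) := by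
      have := hεε0.sub ((hδ0.const_mul (Bc:ℝ)))
      simpa using this
    apply htt.congr'
    filter_upwards [Filter.eventually_ge_atTop N] with n hn
    obtain ⟨j, rfl⟩ := Nat.exists_eq_add_of_le hn
    exact (hkey j).symm
  have hγ0 : γ = 0 := by
    by_contra hne
    have habs : Filter.Tendsto (fun n => q n * |γ|) Filter.atTop Filter.atTop :=
      hqtop.atTop_mul_const (abs_pos.2 hne)
    have h1 : ∀ᶠ n in Filter.atTop, (1:ℝ) ≤ q n * |γ| :=
      habs.eventually_ge_atTop 1
    have h2 : ∀ᶠ n in Filter.atTop, |q n * γ| < 1 := by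
      have h3 := htend.abs
      rw [abs_zero] at h3
      exact h3.eventually (gt_mem_nhds one_pos)
    obtain ⟨n, hn1, hn2⟩ := (h1.and h2).exists
    rw [abs_mul, abs_of_pos (hqpos n)] at hn2
    linarith
  exact ⟨Bc, A, by rw [hγ] at hγ0; linarith⟩
end

section
/- Rajchman's lemma: let (X, 𝓑, μ) be a probability space and (f_n) a sequence in L²(X, μ) with ‖f_n‖₂ ≤ C for all n and ⟨f_n, f_m⟩ = 0 for n ≠ m. Then (1/n)∑_{k=1}^{n} f_k → 0 almost everywhere. -/
/-!
Orthogonality gives `∫ (∑_{k ∈ s} f k)² ≤ #s · C²`. Writing `S m = ∑_{k ≤ m} f k`, the integrals of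
`(S (n²) / n²)²` are at most `C² / n²`, a summable sequence, so `S (n²) / n² → 0` a.e. For
`n² ≤ m < (n + 1)²` the deviation `S m - S (n²)` is dominated by the block sum
`∑_{n² ≤ j < (n+1)²} (S j - S (n²))²`, whose integral is at most `(2n + 1)² C²`; divided by `n⁴`
this is again summable, so the block sums are `o(n⁴)` a.e., and `S m / m → 0` follows.
-/

open MeasureTheory Filter Finset Topology

theorem sum_Icc_one_add_sum_Ioc {M : Type*} [AddCommMonoid M] (a : ℕ → M) {m n : ℕ}
    (h : m ≤ n) : ∑ k ∈ Icc 1 m, a k + ∑ k ∈ Ioc m n, a k = ∑ k ∈ Icc 1 n, a k := by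
  have hIoc (j : ℕ) : Icc 1 j = Ioc 0 j := Icc_add_one_left_eq_Ioc 0 j
  rw [hIoc, hIoc, sum_Ioc_consecutive a m.zero_le h]

theorem tendsto_zero_of_tendsto_sq {α : Type*} {l : Filter α} {u : α → ℝ}
    (h : Tendsto (fun i => u i ^ 2) l (𝓝 0)) : Tendsto u l (𝓝 0) := by
  rw [tendsto_zero_iff_abs_tendsto_zero]
  simpa [Function.comp_def, Real.sqrt_sq_eq_abs] using (Real.continuous_sqrt.tendsto 0).comp h

theorem sq_average_le_of_sq_le_of_lt_succ_sq {a : ℕ → ℝ} {n m : ℕ} (hn : 0 < n) (hnm : n ^ 2 ≤ m)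
    (hmn : m < (n + 1) ^ 2) :
    (1 / (m : ℝ) * ∑ k ∈ Icc 1 m, a k) ^ 2 ≤
      2 * ((∑ k ∈ Icc 1 (n ^ 2), a k) / n ^ 2) ^ 2 +
        2 * ((∑ j ∈ Ico (n ^ 2) ((n + 1) ^ 2), (∑ k ∈ Ioc (n ^ 2) j, a k) ^ 2) / n ^ 4) := by
  set A := ∑ k ∈ Icc 1 (n ^ 2), a k
  set B := ∑ k ∈ Ioc (n ^ 2) m, a k
  have hB : B ^ 2 ≤ ∑ j ∈ Ico (n ^ 2) ((n + 1) ^ 2), (∑ k ∈ Ioc (n ^ 2) j, a k) ^ 2 :=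
    single_le_sum (f := fun j => (∑ k ∈ Ioc (n ^ 2) j, a k) ^ 2) (fun _ _ => sq_nonneg _)
      (mem_Ico.2 ⟨hnm, hmn⟩)
  have hnm' : ((n : ℝ) ^ 2) ≤ m := by exact_mod_cast hnm
  have hn' : (0 : ℝ) < n := by exact_mod_cast hn
  rw [← sum_Icc_one_add_sum_Ioc a hnm]
  calc (1 / (m : ℝ) * (A + B)) ^ 2 = (A + B) ^ 2 / (m : ℝ) ^ 2 := by ring
    _ ≤ (A + B) ^ 2 / ((n : ℝ) ^ 2) ^ 2 := by gcongr
    _ ≤ (2 * A ^ 2 + 2 * B ^ 2) / ((n : ℝ) ^ 2) ^ 2 := by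
        gcongr; nlinarith [sq_nonneg (A - B)]
    _ = 2 * (A / n ^ 2) ^ 2 + 2 * (B ^ 2 / n ^ 4) := by ring
    _ ≤ _ := by gcongr

theorem tendsto_average_zero_of_sq_subseq {a : ℕ → ℝ}
    (hsq : Tendsto (fun n : ℕ => ((∑ k ∈ Icc 1 (n ^ 2), a k) / n ^ 2) ^ 2) atTop (𝓝 0))
    (hblock : Tendsto (fun n : ℕ =>
      (∑ j ∈ Ico (n ^ 2) ((n + 1) ^ 2), (∑ k ∈ Ioc (n ^ 2) j, a k) ^ 2) / n ^ 4) atTop (𝓝 0)) :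
    Tendsto (fun m : ℕ => 1 / (m : ℝ) * ∑ k ∈ Icc 1 m, a k) atTop (𝓝 0) := by
  refine tendsto_zero_of_tendsto_sq ?_
  have hsqrt : Tendsto Nat.sqrt atTop atTop :=
    tendsto_atTop_atTop.2 fun n => ⟨n * n, fun m hm => Nat.le_sqrt.2 hm⟩
  have hbound := ((hsq.const_mul 2).add (hblock.const_mul 2)).comp hsqrt
  simp only [mul_zero, add_zero] at hbound
  refine squeeze_zero' (.of_forall fun m => sq_nonneg _) ?_ hbound
  filter_upwards [eventually_gt_atTop 0] with m hm
  exact sq_average_le_of_sq_le_of_lt_succ_sq (Nat.sqrt_pos.2 hm) (Nat.sqrt_le' m) (Nat.lt_succ_sqrt' m)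

section

variable {X : Type*} [MeasurableSpace X] {μ : Measure X}

theorem ae_tendsto_zero_of_summable_integral_norm {E : Type*} [NormedAddCommGroup E]
    {g : ℕ → X → E} (hg : ∀ n, Integrable (g n) μ)
    (hsum : Summable fun n => ∫ x, ‖g n x‖ ∂μ) :
    ∀ᵐ x ∂μ, Tendsto (fun n => g n x) atTop (𝓝 0) := by
  have h_tsum : ∑' n, eLpNorm (g n) 1 μ ≠ ⊤ := by
    simp_rw [eLpNorm_one_eq_lintegral_enorm, ← ofReal_integral_norm_eq_lintegral_enorm (hg _),
      ← ENNReal.ofReal_tsum_of_nonneg (fun n => integral_nonneg fun x => norm_nonneg _) hsum]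
    exact ENNReal.ofReal_ne_top
  filter_upwards [summable_norm_of_tsum_eLpNorm_ne_top le_rfl
    (fun n => (hg n).aestronglyMeasurable) h_tsum] with x hx
  exact tendsto_zero_iff_norm_tendsto_zero.2 hx.tendsto_atTop_zero

theorem ae_tendsto_zero_of_integral_le_div_sq {g : ℕ → X → ℝ} (hg_nonneg : ∀ n x, 0 ≤ g n x)
    (hg : ∀ n, Integrable (g n) μ) {c : ℝ} (hle : ∀ n : ℕ, ∫ x, g n x ∂μ ≤ c / n ^ 2) :
    ∀ᵐ x ∂μ, Tendsto (fun n => g n x) atTop (𝓝 0) := by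
  refine ae_tendsto_zero_of_summable_integral_norm hg ?_
  simp_rw [Real.norm_of_nonneg (hg_nonneg _ _)]
  refine .of_nonneg_of_le (fun n => integral_nonneg (hg_nonneg n)) hle ?_
  simpa only [div_eq_mul_inv] using (Real.summable_nat_pow_inv.2 one_lt_two).mul_left c

theorem integral_sq_le_of_eLpNorm_le {f : X → ℝ} {C : ℝ} (hf : MemLp f 2 μ)
    (hC : eLpNorm f 2 μ ≤ ENNReal.ofReal C) :
    ∫ x, f x ^ 2 ∂μ ≤ max C 0 ^ 2 := by
  have h := ENNReal.toReal_mono ENNReal.ofReal_ne_top hC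
  rw [hf.eLpNorm_eq_integral_rpow_norm two_ne_zero ENNReal.ofNat_ne_top,
    ENNReal.toReal_ofReal (by positivity), ENNReal.toReal_ofReal'] at h
  simp only [ENNReal.toReal_ofNat, Real.rpow_two, Real.norm_eq_abs, sq_abs] at h
  calc ∫ x, f x ^ 2 ∂μ = ((∫ x, f x ^ 2 ∂μ) ^ (2⁻¹ : ℝ)) ^ 2 := by
        rw [← Real.rpow_natCast, ← Real.rpow_mul (integral_nonneg fun x => sq_nonneg _)]
        norm_num
    _ ≤ max C 0 ^ 2 := by gcongr

theorem integral_sq_sum_of_orthogonal {f : ℕ → X → ℝ} (hf : ∀ n, MemLp (f n) 2 μ)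
    (horth : ∀ n m, n ≠ m → ∫ x, f n x * f m x ∂μ = 0) (s : Finset ℕ) :
    ∫ x, (∑ k ∈ s, f k x) ^ 2 ∂μ = ∑ k ∈ s, ∫ x, f k x ^ 2 ∂μ := by
  have hint : ∀ k j, Integrable (fun x => f k x * f j x) μ := fun k j =>
    (hf k).integrable_mul (hf j)
  simp_rw [sq, sum_mul_sum]
  rw [integral_finsetSum _ fun k _ => integrable_finsetSum _ fun j _ => hint k j]
  refine sum_congr rfl fun k hk => ?_
  rw [integral_finsetSum _ fun j _ => hint k j,
    sum_eq_single_of_mem k hk fun j _ hjk => horth k j (Ne.symm hjk)]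

theorem integral_sq_sum_le_of_orthogonal {f : ℕ → X → ℝ} {K : ℝ} (hf : ∀ n, MemLp (f n) 2 μ)
    (horth : ∀ n m, n ≠ m → ∫ x, f n x * f m x ∂μ = 0) (hK : ∀ n, ∫ x, f n x ^ 2 ∂μ ≤ K)
    (s : Finset ℕ) :
    ∫ x, (∑ k ∈ s, f k x) ^ 2 ∂μ ≤ #s * K := by
  rw [integral_sq_sum_of_orthogonal hf horth]
  simpa using sum_le_sum fun k _ => hK k

theorem ae_tendsto_sq_sum_div_sq_of_orthogonal {f : ℕ → X → ℝ} {K : ℝ}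
    (hf : ∀ n, MemLp (f n) 2 μ) (horth : ∀ n m, n ≠ m → ∫ x, f n x * f m x ∂μ = 0)
    (hK : ∀ n, ∫ x, f n x ^ 2 ∂μ ≤ K) :
    ∀ᵐ x ∂μ, Tendsto (fun n : ℕ => ((∑ k ∈ Icc 1 (n ^ 2), f k x) / n ^ 2) ^ 2) atTop (𝓝 0) := by
  refine ae_tendsto_zero_of_integral_le_div_sq (c := K) (fun n x => sq_nonneg _)
    (fun n => ((memLp_finsetSum _ fun k _ => hf k).integrable_sq.div_const _).congr
      (.of_forall fun x => (div_pow _ _ _).symm)) fun n => ?_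
  rcases n.eq_zero_or_pos with rfl | hn
  · simp
  have hn' : (0 : ℝ) < n := by exact_mod_cast hn
  simp_rw [div_pow]
  rw [integral_div, div_le_div_iff₀ (by positivity) (by positivity)]
  calc (∫ x, (∑ k ∈ Icc 1 (n ^ 2), f k x) ^ 2 ∂μ) * n ^ 2 ≤ (n ^ 2 * K) * n ^ 2 := by
        gcongr
        have h := integral_sq_sum_le_of_orthogonal hf horth hK (Icc 1 (n ^ 2))
        rwa [Nat.card_Icc, add_tsub_cancel_right, Nat.cast_pow] at h
    _ = K * ((n : ℝ) ^ 2) ^ 2 := by ring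

theorem ae_tendsto_block_sq_sum_div_of_orthogonal {f : ℕ → X → ℝ} {K : ℝ}
    (hf : ∀ n, MemLp (f n) 2 μ) (horth : ∀ n m, n ≠ m → ∫ x, f n x * f m x ∂μ = 0)
    (hK : ∀ n, ∫ x, f n x ^ 2 ∂μ ≤ K) :
    ∀ᵐ x ∂μ, Tendsto (fun n : ℕ =>
      (∑ j ∈ Ico (n ^ 2) ((n + 1) ^ 2), (∑ k ∈ Ioc (n ^ 2) j, f k x) ^ 2) / n ^ 4)
      atTop (𝓝 0) := by
  have hK0 : 0 ≤ K := (integral_nonneg fun x => sq_nonneg _).trans (hK 0)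
  have hint (n j : ℕ) : Integrable (fun x => (∑ k ∈ Ioc n j, f k x) ^ 2) μ :=
    (memLp_finsetSum _ fun k _ => hf k).integrable_sq
  refine ae_tendsto_zero_of_integral_le_div_sq (c := 9 * K) (fun n x => by positivity)
    (fun n => (integrable_finsetSum _ fun j _ => hint _ j).div_const _) fun n => ?_
  rcases n.eq_zero_or_pos with rfl | hn
  · simp
  have hn' : (1 : ℝ) ≤ n := by exact_mod_cast hn
  have hcard : #(Ico (n ^ 2) ((n + 1) ^ 2)) = 2 * n + 1 := by
    rw [Nat.card_Ico]; ring_nf; omega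
  have hblock (j : ℕ) (hj : j ∈ Ico (n ^ 2) ((n + 1) ^ 2)) :
      ∫ x, (∑ k ∈ Ioc (n ^ 2) j, f k x) ^ 2 ∂μ ≤ (2 * n + 1) * K := by
    have hj' : j - n ^ 2 ≤ 2 * n + 1 := by rw [mem_Ico] at hj; ring_nf at hj; omega
    refine (integral_sq_sum_le_of_orthogonal hf horth hK _).trans ?_
    gcongr
    rw [Nat.card_Ioc]
    exact_mod_cast hj'
  rw [integral_div, integral_finsetSum _ fun j _ => hint _ j,
    div_le_div_iff₀ (by positivity) (by positivity)]
  calc (∑ j ∈ Ico (n ^ 2) ((n + 1) ^ 2), ∫ x, (∑ k ∈ Ioc (n ^ 2) j, f k x) ^ 2 ∂μ) * n ^ 2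
      ≤ (#(Ico (n ^ 2) ((n + 1) ^ 2)) • ((2 * n + 1) * K)) * n ^ 2 := by
        gcongr
        exact sum_le_card_nsmul _ _ _ hblock
    _ = (2 * n + 1) ^ 2 * K * n ^ 2 := by rw [hcard, nsmul_eq_mul]; push_cast; ring
    _ ≤ (3 * n) ^ 2 * K * n ^ 2 := by gcongr; linarith
    _ = 9 * K * n ^ 4 := by ring

end

theorem stmt18_general {X : Type*} [MeasurableSpace X] (μ : Measure X)
    (f : ℕ → X → ℝ) (C : ℝ)
    (hmem : ∀ n, MemLp (f n) 2 μ)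
    (hbd : ∀ n, eLpNorm (f n) 2 μ ≤ ENNReal.ofReal C)
    (horth : ∀ n m, n ≠ m → ∫ x, f n x * f m x ∂μ = 0) :
    ∀ᵐ x ∂μ, Tendsto (fun n : ℕ => (1 / (n : ℝ)) * ∑ k ∈ Finset.Icc 1 n, f k x)
      atTop (nhds 0) := by
  have hK (n : ℕ) : ∫ x, f n x ^ 2 ∂μ ≤ max C 0 ^ 2 :=
    integral_sq_le_of_eLpNorm_le (hmem n) (hbd n)
  filter_upwards [ae_tendsto_sq_sum_div_sq_of_orthogonal hmem horth hK,
    ae_tendsto_block_sq_sum_div_of_orthogonal hmem horth hK] with x hsq hblock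
  exact tendsto_average_zero_of_sq_subseq hsq hblock

theorem stmt18 {X : Type*} [MeasurableSpace X] (μ : Measure X) [IsProbabilityMeasure μ]
    (f : ℕ → X → ℝ) (C : ℝ)
    (hmem : ∀ n, MemLp (f n) 2 μ)
    (hbd : ∀ n, eLpNorm (f n) 2 μ ≤ ENNReal.ofReal C)
    (horth : ∀ n m, n ≠ m → ∫ x, f n x * f m x ∂μ = 0) :
    ∀ᵐ x ∂μ, Tendsto (fun n : ℕ => (1 / (n : ℝ)) * ∑ k ∈ Finset.Icc 1 n, f k x)
      atTop (nhds 0) :=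
  stmt18_general μ f C hmem hbd horth
end
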